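/- arXiv:2003.06246 — 4 statements merged into one kernel-verified Lean document; each statement's English description precedes it below -/
import Mathlib

section
/- Let k be a field, A an r×r matrix over k, and 1 ≤ s ≤ r. For any i, l ∈ I_{s,r}: Σ_{j ∈ I_{s,r}} (−1)^{τ(l)+τ(j)} A{i; j} · A[l; j] equals det(A) if i = l, and equals 0 if i ≠ l. (Generalized Laplace expansion along s rows, including the alien-cofactor case.) -/
/-!
Write `σ_J` for the permutation of `Fin r` listing `J` increasingly in the first `s` slots and
`Jᶜ` increasingly in the rest. Every permutation of `Fin r` factors uniquely as `σ_J` composed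
with a permutation of the first `s` and one of the last `r - s` slots, so the Leibniz formula
regroups into the Laplace expansion `det C = ∑_J sign σ_J · C{first s rows; J} · C[first s rows; J]`.
The only inversions of `σ_J⁻¹` are the pairs `i < j` with `i ∉ J`, `j ∈ J`, whence
`sign σ_J = (-1) ^ (τ(J) + s(s-1)/2)`. Applying the expansion to the matrix whose rows are those of
`A` indexed by `I` followed by those indexed by `Lᶜ` gives the theorem: that matrix is `A` with rows
permuted by `σ_L` when `I = L`, and it has a repeated row otherwise.
-/

open Equiv Finset Matrix

variable {r s : ℕ}

def finSumFinSubEquiv (h : s ≤ r) : Fin s ⊕ Fin (r - s) ≃ Fin r :=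
  finSumFinEquiv.trans (finCongr (Nat.add_sub_cancel' h))

@[simp] lemma finSumFinSubEquiv_inl_val (h : s ≤ r) (a : Fin s) :
    (finSumFinSubEquiv h (Sum.inl a) : ℕ) = a := by
  simp [finSumFinSubEquiv]

@[simp] lemma finSumFinSubEquiv_inr_val (h : s ≤ r) (b : Fin (r - s)) :
    (finSumFinSubEquiv h (Sum.inr b) : ℕ) = s + b := by
  simp [finSumFinSubEquiv]

abbrev SubsetsOfCard (r s : ℕ) := {J : Finset (Fin r) // #J = s}

namespace Finset

lemma card_compl_fin {J : Finset (Fin r)} (hJ : #J = s) : #Jᶜ = r - s := by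
  rw [card_compl, hJ, Fintype.card_fin]

lemma le_of_card_eq_fin {J : Finset (Fin r)} (hJ : #J = s) : s ≤ r :=
  hJ ▸ J.card_le_univ.trans_eq (Fintype.card_fin r)

/-- `J` in increasing order on `Fin s`, then `Jᶜ` in increasing order on `Fin (r - s)`; the minors
`A{I; J}` and `A[L; J]` are `A.submatrix` along the two halves of these enumerations. -/
def sumComplEquiv (J : Finset (Fin r)) (hJ : #J = s) : Fin s ⊕ Fin (r - s) ≃ Fin r :=
  (Equiv.sumCongr (J.orderIsoOfFin hJ).toEquiv
    ((Jᶜ.orderIsoOfFin (card_compl_fin hJ)).toEquiv.trans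
      (Equiv.subtypeEquivRight fun _ => mem_compl))).trans (Equiv.sumCompl (· ∈ J))

@[simp] lemma sumComplEquiv_inl (J : Finset (Fin r)) (hJ : #J = s) (a : Fin s) :
    J.sumComplEquiv hJ (Sum.inl a) = J.orderEmbOfFin hJ a := rfl

@[simp] lemma sumComplEquiv_inr (J : Finset (Fin r)) (hJ : #J = s) (b : Fin (r - s)) :
    J.sumComplEquiv hJ (Sum.inr b) = Jᶜ.orderEmbOfFin (card_compl_fin hJ) b := rfl

def shufflePerm (J : Finset (Fin r)) (hJ : #J = s) : Perm (Fin r) :=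
  (finSumFinSubEquiv (le_of_card_eq_fin hJ)).symm.trans (J.sumComplEquiv hJ)

lemma range_sumComplEquiv_comp_inl (J : Finset (Fin r)) (hJ : #J = s) (π : Perm (Fin s)) :
    Set.range (fun a => J.sumComplEquiv hJ (Sum.inl (π a))) = J := by
  simp only [sumComplEquiv_inl]
  rw [← range_orderEmbOfFin J hJ]
  exact π.surjective.range_comp _

section Sign

variable (J : Finset (Fin r)) (hJ : #J = s)

lemma lt_iff_of_sumComplEquiv_lt {x y : Fin s ⊕ Fin (r - s)}
    (hxy : J.sumComplEquiv hJ x < J.sumComplEquiv hJ y) :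
    finSumFinSubEquiv (le_of_card_eq_fin hJ) x < finSumFinSubEquiv (le_of_card_eq_fin hJ) y ↔
      J.sumComplEquiv hJ x ∈ J ∨ J.sumComplEquiv hJ y ∉ J := by
  have hl (a : Fin s) : J.orderEmbOfFin hJ a ∈ J := orderEmbOfFin_mem J hJ a
  have hr (b : Fin (r - s)) : Jᶜ.orderEmbOfFin (card_compl_fin hJ) b ∉ J :=
    mem_compl.1 (orderEmbOfFin_mem _ _ b)
  rcases x with a | a <;> rcases y with b | b <;>
    simp only [sumComplEquiv_inl, sumComplEquiv_inr, OrderEmbedding.lt_iff_lt] at hxy ⊢ <;>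
    simp [Fin.lt_def, hl, hr, hxy] <;> omega

lemma sign_shufflePerm_eq_pow_sum_card :
    Perm.sign (J.shufflePerm hJ) = (-1) ^ ∑ j ∈ J, #{i ∈ Iio j | i ∉ J} := by
  rw [← Perm.sign_inv, Perm.sign_eq_prod_prod_Iio]
  have hinv (i j : Fin r) (hij : i < j) :
      (J.shufflePerm hJ)⁻¹ i < (J.shufflePerm hJ)⁻¹ j ↔ i ∈ J ∨ j ∉ J := by
    have := J.lt_iff_of_sumComplEquiv_lt hJ (x := (J.sumComplEquiv hJ).symm i)
      (y := (J.sumComplEquiv hJ).symm j) (by simpa using hij)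
    simpa [shufflePerm] using this
  calc ∏ j, ∏ i ∈ Iio j, (if (J.shufflePerm hJ)⁻¹ i < (J.shufflePerm hJ)⁻¹ j then 1 else -1)
      = ∏ j, ∏ i ∈ Iio j, (if i ∈ J ∨ j ∉ J then 1 else -1 : ℤˣ) :=
        prod_congr rfl fun j _ => prod_congr rfl fun i hi =>
          if_congr (hinv i j (mem_Iio.1 hi)) rfl rfl
    _ = ∏ j ∈ J, (-1) ^ #{i ∈ Iio j | i ∉ J} := by
        rw [← prod_subset (subset_univ J) fun j _ hj => by simp [hj]]
        exact prod_congr rfl fun j hj => by simp [prod_ite, hj]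
    _ = _ := prod_pow_eq_pow_sum _ _ _

end Sign

lemma sum_card_filter_lt_eq_choose_two {α : Type*} [LinearOrder α] (J : Finset α) :
    ∑ j ∈ J, #{i ∈ J | i < j} = (#J).choose 2 := by
  induction J using Finset.induction_on_max with
  | empty => simp
  | insert m J hlt ih =>
    have hm : m ∉ J := fun h => lt_irrefl m (hlt m h)
    have hfilter : ∀ j ∈ J, #{i ∈ insert m J | i < j} = #{i ∈ J | i < j} := fun j hj => by
      rw [filter_insert, if_neg (hlt j hj).not_gt]
    rw [sum_insert hm, sum_congr rfl hfilter, ih, card_insert_of_notMem hm,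
      filter_insert, if_neg (lt_irrefl m), filter_true_of_mem hlt, Nat.choose_succ_succ',
      Nat.choose_one_right]

lemma sum_card_filter_notMem_add_choose_two (J : Finset (Fin r)) :
    ∑ j ∈ J, #{i ∈ Iio j | i ∉ J} + (#J).choose 2 = ∑ j ∈ J, (j : ℕ) := by
  rw [← sum_card_filter_lt_eq_choose_two, ← sum_add_distrib]
  refine sum_congr rfl fun j _ => ?_
  have : ({i ∈ J | i < j} : Finset (Fin r)) = {i ∈ Iio j | i ∈ J} := by
    ext i; simp [and_comm]
  rw [this, add_comm, card_filter_add_card_filter_not, Fin.card_Iio]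

lemma sign_shufflePerm (J : Finset (Fin r)) (hJ : #J = s) :
    Perm.sign (J.shufflePerm hJ) = (-1) ^ (∑ j ∈ J, (j : ℕ) + s.choose 2) := by
  rw [sign_shufflePerm_eq_pow_sum_card, ← sum_card_filter_notMem_add_choose_two, hJ, add_assoc,
    ← two_mul, pow_add, pow_mul, Int.units_sq, one_pow, mul_one]

lemma neg_one_pow_sum_add_sum_eq_sign_mul_sign {R : Type*} [CommRing R]
    (L J : SubsetsOfCard r s) :
    (-1 : R) ^ ((∑ a ∈ L.1, (a : ℕ)) + ∑ a ∈ J.1, (a : ℕ)) =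
      (Perm.sign (L.1.shufflePerm L.2) : R) * (Perm.sign (J.1.shufflePerm J.2) : R) := by
  rw [sign_shufflePerm, sign_shufflePerm]
  push_cast
  rw [← pow_add, add_add_add_comm, ← two_mul, pow_add (-1 : R) _ (2 * _),
    (even_two_mul _).neg_one_pow, mul_one]

end Finset

section BlockPerm

variable (h : s ≤ r)

def blockPerm (x : Σ _ : SubsetsOfCard r s, Perm (Fin s) × Perm (Fin (r - s))) : Perm (Fin r) :=
  (finSumFinSubEquiv h).symm.trans ((Equiv.sumCongr x.2.1 x.2.2).trans (x.1.1.sumComplEquiv x.1.2))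

lemma blockPerm_injective : Function.Injective (blockPerm h) := by
  rintro ⟨J, π, ρ⟩ ⟨J', π', ρ'⟩ heq
  have hsum : (Equiv.sumCongr π ρ).trans (J.1.sumComplEquiv J.2) =
      (Equiv.sumCongr π' ρ').trans (J'.1.sumComplEquiv J'.2) := by
    refine Equiv.ext fun x => ?_
    simpa [blockPerm] using congr($heq (finSumFinSubEquiv h x))
  obtain rfl : J = J' := Subtype.ext <| Finset.coe_injective <| by
    rw [← range_sumComplEquiv_comp_inl J.1 J.2 π, ← range_sumComplEquiv_comp_inl J'.1 J'.2 π']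
    exact congrArg (fun f => Set.range fun a => f (Sum.inl a)) hsum
  have : Perm.sumCongr π ρ = Perm.sumCongr π' ρ' :=
    Equiv.ext fun x => (J.1.sumComplEquiv J.2).injective congr($hsum x)
  obtain ⟨rfl, rfl⟩ :=
    Prod.ext_iff.1 (Perm.sumCongrHom_injective (a₁ := (π, ρ)) (a₂ := (π', ρ')) this)
  rfl

/-- Both sides have `r.choose s * s! * (r - s)! = r!` elements. -/
lemma blockPerm_bijective : Function.Bijective (blockPerm h) := by
  refine (Fintype.bijective_iff_injective_and_card _).2 ⟨blockPerm_injective h, ?_⟩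
  simp only [Fintype.card_sigma, Fintype.card_prod, Fintype.card_perm, Fintype.card_fin,
    sum_const, card_univ, Fintype.card_finset_len, smul_eq_mul, ← mul_assoc,
    Nat.choose_mul_factorial_mul_factorial h]

lemma sign_blockPerm (x : Σ _ : SubsetsOfCard r s, Perm (Fin s) × Perm (Fin (r - s))) :
    Perm.sign (blockPerm h x) =
      Perm.sign (x.1.1.shufflePerm x.1.2) * (Perm.sign x.2.1 * Perm.sign x.2.2) := by
  have : blockPerm h x =
      x.1.1.shufflePerm x.1.2 * (finSumFinSubEquiv h).permCongr (Perm.sumCongr x.2.1 x.2.2) := by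
    ext; simp [blockPerm, shufflePerm, Equiv.permCongr_apply]
  rw [this, Perm.sign_mul, Perm.sign_permCongr, Perm.sign_sumCongr]

end BlockPerm

namespace Matrix

variable {R : Type*} [CommRing R]

theorem det_eq_sum_shufflePerm (h : s ≤ r) (C : Matrix (Fin r) (Fin r) R) :
    C.det = ∑ J : SubsetsOfCard r s, (Perm.sign (J.1.shufflePerm J.2) : R) *
      ((C.submatrix (finSumFinSubEquiv h ∘ Sum.inl) (J.1.sumComplEquiv J.2 ∘ Sum.inl)).det *
       (C.submatrix (finSumFinSubEquiv h ∘ Sum.inr) (J.1.sumComplEquiv J.2 ∘ Sum.inr)).det) := by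
  rw [← det_transpose, det_apply', ← (blockPerm_bijective h).sum_comp, Fintype.sum_sigma]
  refine sum_congr rfl fun J _ => ?_
  simp only [← det_transpose (C.submatrix _ _), det_apply']
  rw [sum_mul_sum, mul_sum, Fintype.sum_prod_type]
  refine sum_congr rfl fun π _ => ?_
  rw [mul_sum]
  refine sum_congr rfl fun ρ _ => ?_
  rw [sign_blockPerm, ← (finSumFinSubEquiv h).prod_comp, Fintype.prod_sum_type]
  simp only [Units.val_mul, Int.cast_mul, blockPerm, trans_apply, symm_apply_apply,
    sumCongr_apply, Sum.map_inl, sumComplEquiv_inl, transpose_apply, Sum.map_inr,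
    sumComplEquiv_inr, submatrix_apply, Function.comp_apply]
  ring

lemma det_submatrix_sumElim_sumComplEquiv (A : Matrix (Fin r) (Fin r) R)
    (I L : SubsetsOfCard r s) :
    (A.submatrix (Sum.elim (I.1.sumComplEquiv I.2 ∘ Sum.inl) (L.1.sumComplEquiv L.2 ∘ Sum.inr) ∘
      (finSumFinSubEquiv (le_of_card_eq_fin L.2)).symm) id).det =
      if I = L then (Perm.sign (L.1.shufflePerm L.2) : R) * A.det else 0 := by
  split_ifs with hIL
  · subst hIL
    have : Sum.elim (I.1.sumComplEquiv I.2 ∘ Sum.inl) (I.1.sumComplEquiv I.2 ∘ Sum.inr) ∘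
        (finSumFinSubEquiv (le_of_card_eq_fin I.2)).symm = I.1.shufflePerm I.2 := by
      ext x
      cases h : (finSumFinSubEquiv (le_of_card_eq_fin I.2)).symm x <;> simp [shufflePerm, h]
    rw [this, det_permute]
  · obtain ⟨x, hxI, hxL⟩ : ∃ x ∈ I.1, x ∉ L.1 := not_subset.1 fun hsub =>
      hIL (Subtype.ext (eq_of_subset_of_card_le hsub (by rw [I.2, L.2])))
    obtain ⟨a, ha⟩ : x ∈ Set.range (I.1.orderEmbOfFin I.2) := by
      rwa [range_orderEmbOfFin]
    obtain ⟨b, hb⟩ : x ∈ Set.range (L.1ᶜ.orderEmbOfFin (card_compl_fin L.2)) := by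
      rw [range_orderEmbOfFin, coe_compl]; exact hxL
    refine det_zero_of_row_eq (i := finSumFinSubEquiv (le_of_card_eq_fin L.2) (Sum.inl a))
      (j := finSumFinSubEquiv (le_of_card_eq_fin L.2) (Sum.inr b)) (by simp) ?_
    ext y
    simp [ha, hb]

theorem sum_sign_shufflePerm_mul_det_mul_det (A : Matrix (Fin r) (Fin r) R)
    (I L : SubsetsOfCard r s) :
    ∑ J : SubsetsOfCard r s, (Perm.sign (J.1.shufflePerm J.2) : R) *
      ((A.submatrix (I.1.sumComplEquiv I.2 ∘ Sum.inl) (J.1.sumComplEquiv J.2 ∘ Sum.inl)).det *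
       (A.submatrix (L.1.sumComplEquiv L.2 ∘ Sum.inr) (J.1.sumComplEquiv J.2 ∘ Sum.inr)).det) =
      if I = L then (Perm.sign (L.1.shufflePerm L.2) : R) * A.det else 0 := by
  rw [← det_submatrix_sumElim_sumComplEquiv, det_eq_sum_shufflePerm (le_of_card_eq_fin L.2)]
  simp [Function.comp_def]

end Matrix

/-- generalized Laplace expansion along `s` rows, including the
alien-cofactor case: for an `r×r` matrix `A`, `1 ≤ s ≤ r`, and `I, L ∈ I_{s,r}`,
`Σ_{J ∈ I_{s,r}} (−1)^{τ(L)+τ(J)} A{I; J} · A[L; J]` equals `det A` if `I = L` and `0`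
otherwise.  Here `A{I; J}` is the `s×s` minor with rows `I` and columns `J`, `A[L; J]`
is the complementary `(r−s)×(r−s)` minor obtained by deleting rows `L` and columns `J`,
and `τ(I)` is the sum of the entries of `I` (the parity of `τ(L)+τ(J)` is unaffected by
the choice of 0- or 1-indexing). -/
theorem stmt3 {k : Type*} [Field k] (r s : ℕ)
    (A : Matrix (Fin r) (Fin r) k)
    (I L : {S : Finset (Fin r) // S.card = s}) :
    ∑ J : {S : Finset (Fin r) // S.card = s},
      (-1 : k) ^ ((∑ a ∈ L.1, (a : ℕ)) + ∑ a ∈ J.1, (a : ℕ)) *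
        ((A.submatrix (fun a => (I.1.orderIsoOfFin I.2 a : Fin r))
                      (fun a => (J.1.orderIsoOfFin J.2 a : Fin r))).det *
         (A.submatrix
            (fun a : Fin (r - s) =>
              ((L.1ᶜ).orderIsoOfFin (by rw [Finset.card_compl, L.2, Fintype.card_fin]) a : Fin r))
            (fun a : Fin (r - s) =>
              ((J.1ᶜ).orderIsoOfFin (by rw [Finset.card_compl, J.2, Fintype.card_fin]) a : Fin r))).det)
      = if I = L then A.det else 0 := by
  simp_rw [neg_one_pow_sum_add_sum_eq_sign_mul_sign (R := k) L, mul_assoc, ← mul_sum]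
  refine (congrArg _ (sum_sign_shufflePerm_mul_det_mul_det A I L)).trans ?_
  split_ifs <;> simp [← mul_assoc, ← Int.cast_mul, ← Units.val_mul]
end

section
/- Let k be a field, n ≥ 1, d ≥ 3, and M = (x_{a,b}) a 2n×d matrix over k. Fix i = (i_1 < … < i_{d−2}) ∈ I_{d−2,2n}. For 1 ≤ t ≤ n let R(i,t) be the d×d matrix whose rows, in order, are rows i_1, …, i_{d−2}, t, n+t of M (so det R(i,t) = 0 whenever t or n+t occurs among the i_l). For 1 ≤ j_1 < j_2 ≤ d set M(j_1,j_2) = Σ_{t=1}^n (x_{t,j_1} x_{n+t,j_2} − x_{n+t,j_1} x_{t,j_2}) and let D(i,j_1,j_2) be the determinant of the (d−2)×(d−2) submatrix of M with rows i_1,…,i_{d−2} and all columns except j_1 and j_2. Then Σ_{t=1}^n det R(i,t) = Σ_{1 ≤ j_1 < j_2 ≤ d} (−1)^{j_1+j_2+1} M(j_1,j_2) · D(i,j_1,j_2). -/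
open Matrix BigOperators

/-- The standard symplectic matrix `J = [[0, -Iₙ],[Iₙ, 0]]` of size `2n × 2n`. -/
def Jmat (k : Type*) [Field k] (n : ℕ) : Matrix (Fin (2*n)) (Fin (2*n)) k :=
  Matrix.of fun a b => if a.1 + n = b.1 then (-1 : k) else if b.1 + n = a.1 then 1 else 0

/-- A subspace `U ⊆ k^{2n}` is isotropic if `uᵀ J w = 0` for all `u, w ∈ U`. -/
def IsIsotropic (k : Type*) [Field k] (n : ℕ) (U : Submodule k (Fin (2*n) → k)) : Prop :=
  ∀ u ∈ U, ∀ w ∈ U, u ⬝ᵥ (Jmat k n).mulVec w = 0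

/-- `Kspace k n a` is the subspace `K_a` (with `a` a 1-indexed index in `{0,…,2n}`):
`K_0 = 0`, `K_a = span(e_1,…,e_a)` for `1 ≤ a ≤ n`, and
`K_{n+i} = span(e_1,…,e_n, e_{n+i},…,e_{2n})` for `1 ≤ i ≤ n`. -/
def Kspace (k : Type*) [Field k] (n : ℕ) (a : ℕ) : Submodule k (Fin (2*n) → k) :=
  Submodule.span k
    {v | ∃ p : Fin (2*n), ((p.1 < a ∧ p.1 < n) ∨ (n < a ∧ a ≤ p.1 + 1)) ∧ v = Pi.single p 1}

/-- `σ` on 1-indexed `{1,…,2n}`: `σ(a) = a-1` for `a ≤ n`, `σ(a) = a+1` for `n < a < 2n`,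
`σ(2n) = n`. -/
def sigmaFn (n a : ℕ) : ℕ := if a ≤ n then a - 1 else if a < 2*n then a + 1 else n

/-- Membership in `\overline{I}^{Sp}_{d,2n}` (0-indexed entries): a `d`-tuple of pairwise
distinct elements of `Fin (2n)` such that for some `r ≤ d`, the first `r` entries are
strictly increasing with (1-indexed) values `≤ n` and the remaining entries are strictly
decreasing with (1-indexed) values `> n`. -/
def IsSpBarTuple (n : ℕ) {d : ℕ} (i : Fin d → Fin (2*n)) : Prop :=
  Function.Injective i ∧ ∃ r ≤ d,
    (∀ a b : Fin d, a < b → b.1 < r → i a < i b) ∧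
    (∀ a : Fin d, a.1 < r → (i a).1 < n) ∧
    (∀ a b : Fin d, a < b → r ≤ a.1 → i b < i a) ∧
    (∀ a : Fin d, r ≤ a.1 → n ≤ (i a).1)

/-- Membership in `I^{Sp}_{d,2n}`: a tuple of `\overline{I}^{Sp}_{d,2n}` whose entries
contain no pair `{t, n+t}`. -/
def IsSpTuple (n : ℕ) {d : ℕ} (i : Fin d → Fin (2*n)) : Prop :=
  IsSpBarTuple n i ∧ ∀ a b : Fin d, (i b).1 ≠ (i a).1 + n

/-- The order `i ≥^{Sp} j`: for every `t`, `i_t ≥ j_t` if `j_t ≤ n` (1-indexed), and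
`n < i_t ≤ j_t` if `j_t > n`. -/
def spGE (n : ℕ) {d : ℕ} (i j : Fin d → Fin (2*n)) : Prop :=
  ∀ t : Fin d, if (j t).1 < n then j t ≤ i t else (n ≤ (i t).1 ∧ i t ≤ j t)

/-- The coordinate subspace `e_i = span(e_{i_1},…,e_{i_d})`. -/
def eSpan (k : Type*) [Field k] {n d : ℕ} (i : Fin d → Fin (2*n)) :
    Submodule k (Fin (2*n) → k) :=
  Submodule.span k (Set.range fun t => Pi.single (i t) (1 : k))

/-- The Borel subgroup `B` of `Sp_{2n}(k)`: symplectic matrices of block form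
`[[A, B'],[0, D]]` with `A` upper triangular. -/
def inB (k : Type*) [Field k] (n : ℕ) (M : Matrix (Fin (2*n)) (Fin (2*n)) k) : Prop :=
  Mᵀ * Jmat k n * M = Jmat k n ∧
  ∀ a b : Fin (2*n), ((n ≤ a.1 ∧ b.1 < n) ∨ (a.1 < n ∧ b.1 < n ∧ b.1 < a.1)) → M a b = 0

/-- The opposite Borel subgroup `B⁻` of `Sp_{2n}(k)`: symplectic matrices of block form
`[[A, 0],[C, D]]` with `A` lower triangular. -/
def inBminus (k : Type*) [Field k] (n : ℕ) (M : Matrix (Fin (2*n)) (Fin (2*n)) k) : Prop :=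
  Mᵀ * Jmat k n * M = Jmat k n ∧
  ∀ a b : Fin (2*n), ((a.1 < n ∧ n ≤ b.1) ∨ (a.1 < n ∧ b.1 < n ∧ a.1 < b.1)) → M a b = 0

/-- The Plücker coordinate `p_S(M)`: determinant of the `d×d` submatrix of `M` formed by
the rows in `S` taken in increasing order (and `0` if `S` does not have `d` elements). -/
def pluckerS {k : Type*} [Field k] {n d : ℕ} (M : Matrix (Fin (2*n)) (Fin d) k)
    (S : Finset (Fin (2*n))) : k :=
  if hS : S.card = d then
    (M.submatrix (fun a => (S.orderIsoOfFin hS a : Fin (2*n))) id).det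
  else 0

/-- The Plücker coordinate attached to the underlying set of a tuple `j`. -/
def pluckerT {k : Type*} [Field k] {n d : ℕ} (M : Matrix (Fin (2*n)) (Fin d) k)
    (j : Fin d → Fin (2*n)) : k :=
  pluckerS M (Finset.image j Finset.univ)

/-- The row-selection function for `R(i,t)`: rows `i_1, …, i_{d-2}, t, n+t` in order. -/
def rowsFn {n : ℕ} (d : ℕ) (i : Fin (d-2) → Fin (2*n)) (t : Fin n) : Fin d → Fin (2*n) :=
  fun l =>
    if h : l.1 < d - 2 then i ⟨l.1, h⟩
    else if l.1 = d - 2 then ⟨t.1, by have := t.2; omega⟩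
    else ⟨n + t.1, by have := t.2; omega⟩

/-- The column-selection function enumerating, in increasing order, the columns of a
`2n × d` matrix other than `j1 < j2`. -/
def colSkip (d : ℕ) (j1 j2 : Fin d) (c : Fin (d-2)) : Fin d :=
  if c.1 < j1.1 then ⟨c.1, by have := c.2; omega⟩
  else if c.1 + 1 < j2.1 then ⟨c.1 + 1, by have := c.2; omega⟩
  else ⟨c.1 + 2, by have := c.2; omega⟩

/-- Membership of a subspace `U` in the Richardson variety `R(u,v)` of `Sp_{2n}(k)/P_d`:
`U` is a `d`-dimensional isotropic subspace with `dim(U ∩ K_{u_t}) ≥ t` and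
`dim(U ∩ K_{σ(v_t)}) ≤ t-1` for all `1 ≤ t ≤ d`. -/
def inRich (k : Type*) [Field k] (n : ℕ) {d : ℕ} (u v : Fin d → Fin (2*n))
    (U : Submodule k (Fin (2*n) → k)) : Prop :=
  IsIsotropic k n U ∧ Module.finrank k U = d ∧
  ∀ t : Fin d,
    t.1 + 1 ≤ Module.finrank k ↥(U ⊓ Kspace k n ((u t).1 + 1)) ∧
    Module.finrank k ↥(U ⊓ Kspace k n (sigmaFn n ((v t).1 + 1))) ≤ t.1

/-! Expanding `det R(i,t)` along its last two rows (rows `t` and `n+t`) writes it as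
`Σ_{j1<j2} (-1)^{j1+j2+1} · (2×2 minor of rows t, n+t in columns j1, j2) · D(i,j1,j2)`;
summing over `t` collects the `2×2` minors into `M(j1,j2)`. The two-row Laplace expansion comes
from expanding along the last row twice and pairing the term deleting columns `(a, b)` with
the one deleting `(b, a)`. -/

open Finset

theorem Fin.val_succAbove_eq_ite {n : ℕ} (p : Fin (n + 1)) (i : Fin n) :
    (p.succAbove i).1 = if i.1 < p.1 then i.1 else i.1 + 1 := by
  unfold Fin.succAbove
  split_ifs <;> simp_all [Fin.lt_def]

theorem colSkip_min_max_eq_succAbove_comp_succAbove {m : ℕ} (a : Fin (m + 2)) (j : Fin (m + 1)) :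
    colSkip (m + 2) (min a (a.succAbove j)) (max a (a.succAbove j)) =
      a.succAbove ∘ j.succAbove := by
  funext c
  have hj := a.val_succAbove_eq_ite j
  have hc := j.val_succAbove_eq_ite c
  have hac := a.val_succAbove_eq_ite (j.succAbove c)
  ext
  rw [Function.comp_apply, hac, hc]
  unfold colSkip
  split_ifs at hj ⊢ <;> simp only [Fin.coe_min, Fin.coe_max] at * <;> omega

theorem neg_one_pow_val_succAbove {R : Type*} [Monoid R] [HasDistribNeg R] {n : ℕ}
    (p : Fin (n + 1)) (i : Fin n) :
    (-1 : R) ^ (p.succAbove i).1 = if p.succAbove i < p then (-1) ^ i.1 else -(-1) ^ i.1 := by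
  simp only [Fin.lt_def, p.val_succAbove_eq_ite]
  split_ifs <;> first | omega | simp [pow_succ]

theorem Fin.sum_sum_succAbove_eq_sum_sum_lt {M : Type*} [AddCommMonoid M] {n : ℕ}
    (f : Fin (n + 1) → Fin (n + 1) → M) :
    ∑ a, ∑ j, f a (a.succAbove j) = ∑ a, ∑ b, if a < b then f a b + f b a else 0 := by
  have split (a : Fin (n + 1)) : ∑ j, f a (a.succAbove j) =
      ∑ b, ((if a < b then f a b else 0) + if b < a then f a b else 0) := by
    rw [Fin.sum_univ_succAbove _ a]
    simp only [lt_irrefl, if_false, add_zero, zero_add]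
    refine sum_congr rfl fun j _ => ?_
    rcases (a.succAbove_ne j).lt_or_gt with h | h <;> simp [h, h.not_gt]
  simp only [split, sum_add_distrib, ite_add_zero]
  rw [sum_comm (f := fun a b => if b < a then f a b else 0)]

theorem Matrix.det_laplace_last_two_rows {R : Type*} [CommRing R] {m : ℕ}
    (A : Matrix (Fin (m + 2)) (Fin (m + 2)) R) :
    A.det = ∑ j1, ∑ j2, if j1 < j2 then
      (-1) ^ (j1.1 + j2.1 + 1) *
        (A (Fin.last m).castSucc j1 * A (Fin.last (m + 1)) j2
          - A (Fin.last (m + 1)) j1 * A (Fin.last m).castSucc j2) *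
        (A.submatrix (Fin.castSucc ∘ Fin.castSucc) (colSkip (m + 2) j1 j2)).det
      else 0 := by
  -- `a` is deleted from the last row, `b` from row `m`; `b` sits at position `b` or `b - 1`
  -- among the remaining columns according as `b < a` or not, whence the extra sign.
  set f : Fin (m + 2) → Fin (m + 2) → R := fun a b =>
    (-1) ^ (a.1 + b.1) * (if b < a then -1 else 1) *
      (A (Fin.last (m + 1)) a * A (Fin.last m).castSucc b) *
      (A.submatrix (Fin.castSucc ∘ Fin.castSucc) (colSkip (m + 2) (min a b) (max a b))).det
  have expand : A.det = ∑ a, ∑ j, f a (a.succAbove j) := by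
    rw [det_succ_row A (Fin.last (m + 1))]
    refine sum_congr rfl fun a _ => ?_
    rw [det_succ_row _ (Fin.last m), mul_sum]
    refine sum_congr rfl fun j _ => ?_
    have sign : (-1 : R) ^ ((Fin.last (m + 1)).1 + a.1) * (-1) ^ ((Fin.last m).1 + j.1) =
        (-1) ^ (a.1 + (a.succAbove j).1) * (if a.succAbove j < a then -1 else 1) := by
      rw [pow_add _ a.1, neg_one_pow_val_succAbove, Fin.val_last, Fin.val_last]
      have hsq : ((-1 : R) ^ m) ^ 2 = 1 := by rw [← pow_mul, pow_mul', neg_one_sq, one_pow]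
      split_ifs <;> linear_combination (-(-1 : R) ^ a.1 * (-1) ^ j.1) * hsq
    simp only [f, submatrix_apply, submatrix_submatrix, Fin.succAbove_last, ← sign,
      colSkip_min_max_eq_succAbove_comp_succAbove]
    ring
  rw [expand, Fin.sum_sum_succAbove_eq_sum_sum_lt]
  refine sum_congr rfl fun j1 _ => sum_congr rfl fun j2 _ => ?_
  split_ifs with h
  · simp only [f, h, h.not_gt, if_true, if_false, min_eq_left h.le, max_eq_right h.le,
      min_eq_right h.le, max_eq_left h.le]
    ring
  · rfl

section rowsFn

variable {n m : ℕ} (i : Fin (m + 2 - 2) → Fin (2 * n)) (t : Fin n)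

theorem rowsFn_comp_castSucc_castSucc :
    rowsFn (m + 2) i t ∘ Fin.castSucc ∘ Fin.castSucc = i := by
  funext c
  simp [rowsFn, c.2]

theorem rowsFn_castSucc_last :
    rowsFn (m + 2) i t (Fin.last m).castSucc = ⟨t.1, by omega⟩ := by
  simp [rowsFn]

theorem rowsFn_last :
    rowsFn (m + 2) i t (Fin.last (m + 1)) = ⟨n + t.1, by omega⟩ := by
  simp [rowsFn]

end rowsFn

/-- for a `2n×d` matrix `M` (`d ≥ 3`, `n ≥ 1`) and a strictly increasing
`(d−2)`-tuple `i` of rows, `Σ_{t=1}^n det R(i,t)`, where `R(i,t)` has rows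
`i_1,…,i_{d−2}, t, n+t` of `M` in order, equals
`Σ_{1 ≤ j1 < j2 ≤ d} (−1)^{j1+j2+1} M(j1,j2) · D(i,j1,j2)`, where
`M(j1,j2) = Σ_{t=1}^n (x_{t,j1} x_{n+t,j2} − x_{n+t,j1} x_{t,j2})` and `D(i,j1,j2)` is the
`(d−2)×(d−2)` minor of `M` with rows `i` and all columns except `j1, j2`. -/
theorem stmt4 {k : Type*} [Field k] (n d : ℕ) (hd : 3 ≤ d)
    (M : Matrix (Fin (2*n)) (Fin d) k)
    (i : Fin (d-2) → Fin (2*n)) :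
    ∑ t : Fin n, (M.submatrix (rowsFn d i t) id).det =
      ∑ j1 : Fin d, ∑ j2 : Fin d, if j1 < j2 then
        (-1 : k) ^ (j1.1 + j2.1 + 1) *
          (∑ t : Fin n,
            (M ⟨t.1, by have := t.2; omega⟩ j1 * M ⟨n + t.1, by have := t.2; omega⟩ j2
              - M ⟨n + t.1, by have := t.2; omega⟩ j1 * M ⟨t.1, by have := t.2; omega⟩ j2)) *
          (M.submatrix i (colSkip d j1 j2)).det
      else 0 := by
  obtain ⟨m, rfl⟩ : ∃ m, d = m + 2 := ⟨d - 2, by omega⟩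
  simp only [det_laplace_last_two_rows, submatrix_submatrix, Function.id_comp,
    rowsFn_comp_castSucc_castSucc, submatrix_apply, id, rowsFn_castSucc_last, rowsFn_last]
  rw [sum_comm]
  refine sum_congr rfl fun j1 _ => ?_
  rw [sum_comm]
  refine sum_congr rfl fun j2 _ => ?_
  rw [sum_ite_irrel, sum_const_zero, mul_sum, sum_mul]
end

section
/- Let k be an algebraically closed field and 3 ≤ d ≤ n. Let M be a 2n×d matrix over k of rank d with column span U. For i = (i_1 < … < i_{d−2}) ∈ I_{d−2,2n} and 1 ≤ t ≤ n let R(i,t) be the d×d matrix whose rows, in order, are rows i_1, …, i_{d−2}, t, n+t of M (so det R(i,t) = 0 whenever t or n+t occurs among the i_l). Then U is isotropic if and only if Σ_{t=1}^n det R(i,t) = 0 for every i ∈ I_{d−2,2n}. (This is the d ≥ 3 case of Theorem 4.4: U ∈ Sp_{2n}(k)/P_d ⊆ G_{d,2n} if and only if U is annihilated by all Σ_{t=1}^n (−1)^{τ(i_1,…,i_{d−2},t,n+t)} p_{(i_1,…,i_{d−2},t,n+t)}.) -/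
open Matrix BigOperators

/-!
Write `S = crossGram M` for the `d × d` matrix `S a b = ∑ₜ M (t, a) M (n + t, b)`. Then
`Mᵀ J M = Sᵀ - S`, so `U` is isotropic iff `S` is symmetric.

Expanding `det R(i,t)` bilinearly in its last two rows gives
`∑ₜ det R(i,t) = ∑_{a,b} S a b * D a b`, where `D a b` is the determinant with rows
`M i₁, …, M i_{d-2}, e_a, e_b`. Since `D` is alternating, the sum vanishes when `S` is symmetric.

Conversely, rank `d` provides rows `r₁ < … < r_d` of `M` forming an invertible `Q`. Passing to
`M Q⁻¹` rescales every sum by `det Q⁻¹` and replaces `S` by a congruent matrix, and makes the rows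
`r` the standard basis. For `i = r` with the positions `p < q` removed, `D a b` vanishes unless
`{a, b} = {p, q}`, so the sum is `(S p q - S q p) * D p q` with `D p q = ±1`.
-/

lemma Finset.sum_sum_eq_zero_of_antisymm {ι M : Type*} [Fintype ι] [AddCommGroup M]
    (f : ι → ι → M) (hf : ∀ a b, f b a = -f a b) (hdiag : ∀ a, f a a = 0) :
    ∑ a, ∑ b, f a b = 0 := by
  rw [← Fintype.sum_prod_type']
  refine Finset.sum_ninvolution Prod.swap (fun x => by simp [hf x.1 x.2]) ?_
    (fun _ => Finset.mem_univ _) (fun _ => rfl)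
  rintro ⟨a, b⟩ hne hswap
  obtain rfl : b = a := congrArg Prod.fst hswap
  exact hne (hdiag b)

lemma Matrix.IsSymm.transpose_mul_mul {m R : Type*} [Fintype m] [CommSemiring R]
    {S : Matrix m m R} (hS : S.IsSymm) (G : Matrix m m R) : (Gᵀ * S * G).IsSymm := by
  rw [IsSymm, transpose_mul, transpose_mul, transpose_transpose, hS.eq, Matrix.mul_assoc]

lemma submatrix_mul_id {l m o p R : Type*} [Fintype o] [CommSemiring R] (M : Matrix m o R)
    (G : Matrix o p R) (f : l → m) :
    (M * G).submatrix f id = M.submatrix f id * G :=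
  rfl

section SymplecticForm

variable {n : ℕ}

def lowIdx (t : Fin n) : Fin (2*n) := ⟨t, by omega⟩

def highIdx (t : Fin n) : Fin (2*n) := ⟨n + t, by omega⟩

lemma sum_fin_two_mul {M : Type*} [AddCommMonoid M] (f : Fin (2*n) → M) :
    ∑ p, f p = ∑ t, f (lowIdx t) + ∑ t, f (highIdx t) := by
  rw [← (finCongr (two_mul n).symm).sum_comp f, Fin.sum_univ_add]
  rfl

variable {k : Type*} [Field k]

lemma Jmat_mul_apply_lowIdx {m : Type*} (A : Matrix (Fin (2*n)) m k) (t : Fin n) (b : m) :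
    (Jmat k n * A) (lowIdx t) b = -A (highIdx t) b := by
  rw [mul_apply, Finset.sum_eq_single (highIdx t)]
  · simp [Jmat, lowIdx, highIdx, add_comm]
  · intro q _ hq
    have hq' : q.1 ≠ n + t := fun h => hq (Fin.ext h)
    simp only [Jmat, of_apply, lowIdx]
    rw [if_neg (by omega), if_neg (by omega), zero_mul]
  · simp

lemma Jmat_mul_apply_highIdx {m : Type*} (A : Matrix (Fin (2*n)) m k) (t : Fin n) (b : m) :
    (Jmat k n * A) (highIdx t) b = A (lowIdx t) b := by
  rw [mul_apply, Finset.sum_eq_single (lowIdx t)]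
  · simp only [Jmat, of_apply, lowIdx, highIdx]
    rw [if_neg (by omega), if_pos (by omega), one_mul]
  · intro q _ hq
    have hq' : q.1 ≠ t := fun h => hq (Fin.ext h)
    simp only [Jmat, of_apply, highIdx]
    rw [if_neg (by omega), if_neg (by omega), zero_mul]
  · simp

def crossGram {R : Type*} [CommSemiring R] {d : ℕ} (M : Matrix (Fin (2*n)) (Fin d) R) :
    Matrix (Fin d) (Fin d) R :=
  (M.submatrix lowIdx id)ᵀ * M.submatrix highIdx id

lemma crossGram_mul {R : Type*} [CommSemiring R] {d e : ℕ} (M : Matrix (Fin (2*n)) (Fin d) R)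
    (G : Matrix (Fin d) (Fin e) R) :
    crossGram (M * G) = Gᵀ * crossGram M * G := by
  rw [crossGram, crossGram, submatrix_mul_id, submatrix_mul_id, transpose_mul, Matrix.mul_assoc,
    Matrix.mul_assoc, Matrix.mul_assoc]

variable {d : ℕ}

lemma transpose_mul_Jmat_mul (M : Matrix (Fin (2*n)) (Fin d) k) :
    Mᵀ * Jmat k n * M = (crossGram M)ᵀ - crossGram M := by
  ext a b
  rw [Matrix.mul_assoc, mul_apply, sum_fin_two_mul]
  simp only [Jmat_mul_apply_lowIdx, Jmat_mul_apply_highIdx]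
  simp only [crossGram, Matrix.sub_apply, transpose_apply, mul_apply, submatrix_apply, id,
    mul_neg, Finset.sum_neg_distrib]
  rw [add_comm, ← sub_eq_add_neg]
  congr 1
  exact Finset.sum_congr rfl fun t _ => mul_comm _ _

lemma isIsotropic_range_iff (M : Matrix (Fin (2*n)) (Fin d) k) :
    IsIsotropic k n (LinearMap.range M.mulVecLin) ↔ Mᵀ * Jmat k n * M = 0 := by
  have hform : ∀ x y : Fin d → k,
      M *ᵥ x ⬝ᵥ Jmat k n *ᵥ (M *ᵥ y) = x ⬝ᵥ (Mᵀ * Jmat k n * M) *ᵥ y := by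
    intro x y
    rw [mulVec_mulVec, dotProduct_mulVec, ← vecMul_transpose, vecMul_vecMul,
      ← dotProduct_mulVec, Matrix.mul_assoc]
  constructor
  · intro h
    ext a b
    have := h _ ⟨Pi.single a 1, rfl⟩ _ ⟨Pi.single b 1, rfl⟩
    rwa [mulVecLin_apply, mulVecLin_apply, hform, mulVec_single_one, single_one_dotProduct]
      at this
  · rintro h _ ⟨x, rfl⟩ _ ⟨y, rfl⟩
    rw [mulVecLin_apply, mulVecLin_apply, hform, h, zero_mulVec, dotProduct_zero]

lemma isIsotropic_range_iff_isSymm (M : Matrix (Fin (2*n)) (Fin d) k) :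
    IsIsotropic k n (LinearMap.range M.mulVecLin) ↔ (crossGram M).IsSymm := by
  rw [isIsotropic_range_iff, transpose_mul_Jmat_mul, sub_eq_zero, IsSymm]

end SymplecticForm

section SnocTwo

variable {α β : Type*} {d : ℕ}

def snocTwo (v : Fin (d-2) → α) (x y : α) : Fin d → α :=
  fun l => if h : l.1 < d-2 then v ⟨l, h⟩ else if l.1 = d-2 then x else y

lemma rowsFn_eq_snocTwo {n : ℕ} (i : Fin (d-2) → Fin (2*n)) (t : Fin n) :
    rowsFn d i t = snocTwo i (lowIdx t) (highIdx t) :=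
  rfl

lemma comp_snocTwo (f : α → β) (v : Fin (d-2) → α) (x y : α) :
    f ∘ snocTwo v x y = snocTwo (f ∘ v) (f x) (f y) := by
  funext l
  simp only [Function.comp, snocTwo]
  split_ifs <;> rfl

lemma snocTwo_castLE (v : Fin (d-2) → α) (x y : α) (c : Fin (d-2)) :
    snocTwo v x y (Fin.castLE (Nat.sub_le d 2) c) = v c := by
  simp [snocTwo]

lemma snocTwo_apply_fst (hd : 2 ≤ d) (v : Fin (d-2) → α) (x y : α) :
    snocTwo v x y ⟨d-2, by omega⟩ = x := by
  simp [snocTwo]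

lemma snocTwo_apply_snd (hd : 2 ≤ d) (v : Fin (d-2) → α) (x y : α) :
    snocTwo v x y ⟨d-1, by omega⟩ = y := by
  simp only [snocTwo]
  rw [dif_neg (by omega), if_neg (by omega)]

lemma update_snocTwo_fst (hd : 2 ≤ d) (v : Fin (d-2) → α) (x y x' : α) :
    Function.update (snocTwo v x y) ⟨d-2, by omega⟩ x' = snocTwo v x' y := by
  funext l
  rw [Function.update_apply]
  split_ifs with h
  · rw [h, snocTwo_apply_fst hd]
  · have : l.1 ≠ d - 2 := fun h' => h (Fin.ext h')
    simp only [snocTwo, if_neg this]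

lemma update_snocTwo_snd (hd : 2 ≤ d) (v : Fin (d-2) → α) (x y y' : α) :
    Function.update (snocTwo v x y) ⟨d-1, by omega⟩ y' = snocTwo v x y' := by
  funext l
  rw [Function.update_apply]
  split_ifs with h
  · rw [h, snocTwo_apply_snd hd]
  · have : l.1 ≠ d - 1 := fun h' => h (Fin.ext h')
    simp only [snocTwo]
    split_ifs <;> first | rfl | omega

lemma snocTwo_swap (hd : 2 ≤ d) (v : Fin (d-2) → α) (x y : α) :
    snocTwo v y x = snocTwo v x y ∘ Equiv.swap ⟨d-2, by omega⟩ ⟨d-1, by omega⟩ := by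
  funext l
  rw [Function.comp_apply]
  by_cases h2 : l.1 = d - 2
  · rw [show l = ⟨d-2, by omega⟩ from Fin.ext h2, Equiv.swap_apply_left, snocTwo_apply_fst hd,
      snocTwo_apply_snd hd]
  by_cases h1 : l.1 = d - 1
  · rw [show l = ⟨d-1, by omega⟩ from Fin.ext h1, Equiv.swap_apply_right, snocTwo_apply_fst hd,
      snocTwo_apply_snd hd]
  rw [Equiv.swap_apply_of_ne_of_ne (fun h => h2 (congrArg Fin.val h))
    (fun h => h1 (congrArg Fin.val h))]
  simp only [snocTwo]
  split_ifs <;> first | rfl | omega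

lemma snocTwo_injective {v : Fin (d-2) → α} {x y : α} (hv : Function.Injective v)
    (hx : x ∉ Set.range v) (hy : y ∉ Set.range v) (hxy : x ≠ y) :
    Function.Injective (snocTwo v x y) := by
  intro l l' h
  simp only [snocTwo] at h
  apply Fin.ext
  split_ifs at h <;>
    first
    | omega
    | exact congrArg (fun c : Fin (d-2) => c.1) (hv h)
    | exact (hx ⟨_, h⟩).elim
    | exact (hx ⟨_, h.symm⟩).elim
    | exact (hy ⟨_, h⟩).elim
    | exact (hy ⟨_, h.symm⟩).elim
    | exact (hxy h).elim
    | exact (hxy h.symm).elim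

end SnocTwo

section ColSkip

variable {d : ℕ}

lemma colSkip_val (p q : Fin d) (c : Fin (d-2)) :
    (colSkip d p q c).1 =
      if c.1 < p.1 then c.1 else if c.1 + 1 < q.1 then c.1 + 1 else c.1 + 2 := by
  unfold colSkip
  split_ifs <;> rfl

lemma colSkip_strictMono (p q : Fin d) : StrictMono (colSkip d p q) := by
  intro c c' h
  rw [Fin.lt_def] at h ⊢
  rw [colSkip_val, colSkip_val]
  split_ifs <;> omega

lemma colSkip_ne_left (p q : Fin d) (c : Fin (d-2)) : colSkip d p q c ≠ p := by
  rw [Fin.ne_iff_vne, colSkip_val]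
  split_ifs <;> omega

lemma colSkip_ne_right {p q : Fin d} (hpq : p < q) (c : Fin (d-2)) : colSkip d p q c ≠ q := by
  rw [Fin.lt_def] at hpq
  rw [Fin.ne_iff_vne, colSkip_val]
  split_ifs <;> omega

lemma mem_range_colSkip {p q : Fin d} (hpq : p < q) {a : Fin d} (hp : a ≠ p) (hq : a ≠ q) :
    a ∈ Set.range (colSkip d p q) := by
  rw [Fin.lt_def] at hpq
  rw [Fin.ne_iff_vne] at hp hq
  refine ⟨⟨if a.1 < p.1 then a.1 else if a.1 < q.1 then a.1 - 1 else a.1 - 2, by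
    have := a.2; split_ifs <;> omega⟩, Fin.ext ?_⟩
  rw [colSkip_val]
  dsimp only
  split_ifs <;> omega

lemma injective_snocTwo_colSkip_iff {p q : Fin d} (hpq : p < q) (a b : Fin d) :
    Function.Injective (snocTwo (colSkip d p q) a b) ↔ a = p ∧ b = q ∨ a = q ∧ b = p := by
  have hd : 2 ≤ d := by have := q.2; rw [Fin.lt_def] at hpq; omega
  constructor
  · intro hinj
    have hpos : ∀ c : Fin (d-2), Fin.castLE (Nat.sub_le d 2) c ≠ ⟨d-2, by omega⟩ ∧
        Fin.castLE (Nat.sub_le d 2) c ≠ ⟨d-1, by omega⟩ := fun c => by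
      constructor <;> exact Fin.ne_of_val_ne (by simp only [Fin.val_castLE]; omega)
    have ha : a = p ∨ a = q := by
      by_contra! h
      obtain ⟨c, hc⟩ := mem_range_colSkip hpq h.1 h.2
      refine (hpos c).1 (hinj ?_)
      rw [snocTwo_castLE, snocTwo_apply_fst hd, hc]
    have hb : b = p ∨ b = q := by
      by_contra! h
      obtain ⟨c, hc⟩ := mem_range_colSkip hpq h.1 h.2
      refine (hpos c).2 (hinj ?_)
      rw [snocTwo_castLE, snocTwo_apply_snd hd, hc]
    have hab : a ≠ b := fun h => by
      have := hinj (a₁ := ⟨d-2, by omega⟩) (a₂ := ⟨d-1, by omega⟩)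
        (by rw [snocTwo_apply_fst hd, snocTwo_apply_snd hd, h])
      exact absurd (Fin.mk.inj this) (by omega)
    rcases ha with rfl | rfl <;> rcases hb with rfl | rfl <;> simp_all
  · have hrange : ∀ {x}, x = p ∨ x = q → x ∉ Set.range (colSkip d p q) := by
      rintro x (hx | hx) ⟨c, hc⟩
      exacts [colSkip_ne_left p q c (hc.trans hx), colSkip_ne_right hpq c (hc.trans hx)]
    rintro (⟨rfl, rfl⟩ | ⟨rfl, rfl⟩)
    · exact snocTwo_injective (colSkip_strictMono _ _).injective (hrange (.inl rfl))
        (hrange (.inr rfl)) hpq.ne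
    · exact snocTwo_injective (colSkip_strictMono _ _).injective (hrange (.inr rfl))
        (hrange (.inl rfl)) hpq.ne'

end ColSkip

section Determinants

variable {R : Type*} [CommRing R]

lemma det_updateRow_eq_sum {m : Type*} [Fintype m] [DecidableEq m] (A : Matrix m m R) (j : m)
    (x : m → R) :
    (A.updateRow j x).det = ∑ a, x a * (A.updateRow j (Pi.basisFun R m a)).det := by
  have hbasis : ∀ a, Pi.basisFun R m a = fun b => if a = b then 1 else 0 := fun a => by
    ext b
    simp [Pi.single_apply, eq_comm]
  simp only [hbasis]
  exact (detRowAlternating.toMultilinearMap.toLinearMap A j).pi_apply_eq_sum_univ x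

lemma det_basisFun_comp_eq_zero_iff [Nontrivial R] {m : Type*} [Fintype m] [DecidableEq m]
    (f : m → m) : det (of (Pi.basisFun R m ∘ f)) = 0 ↔ ¬ Function.Injective f := by
  constructor
  · intro h hf
    let σ : Equiv.Perm m := Equiv.ofBijective f hf.bijective_of_finite
    have hperm : of (Pi.basisFun R m ∘ f) = (1 : Matrix m m R).submatrix σ id := by
      ext l c
      simp [one_apply, Pi.single_apply, σ, eq_comm]
    rw [hperm, det_permute, det_one, mul_one] at h
    rcases Int.units_eq_one_or (Equiv.Perm.sign σ) with hs | hs <;> simp [hs] at h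
  · intro hf
    obtain ⟨l, l', heq, hne⟩ := Function.not_injective_iff.1 hf
    exact det_zero_of_row_eq hne (congrArg (Pi.basisFun R m) heq)

variable {d : ℕ}

lemma det_snocTwo_eq_sum_fst (hd : 2 ≤ d) (V : Fin (d-2) → Fin d → R) (x y : Fin d → R) :
    det (of (snocTwo V x y)) = ∑ a, x a * det (of (snocTwo V (Pi.basisFun R (Fin d) a) y)) := by
  have hrow : ∀ z, of (snocTwo V z y) = (of (snocTwo V 0 y)).updateRow ⟨d-2, by omega⟩ z :=
    fun z => congrArg of (update_snocTwo_fst hd V 0 y z).symm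
  rw [hrow x, det_updateRow_eq_sum]
  simp only [← hrow]

lemma det_snocTwo_eq_sum_snd (hd : 2 ≤ d) (V : Fin (d-2) → Fin d → R) (x y : Fin d → R) :
    det (of (snocTwo V x y)) = ∑ b, y b * det (of (snocTwo V x (Pi.basisFun R (Fin d) b))) := by
  have hrow : ∀ z, of (snocTwo V x z) = (of (snocTwo V x 0)).updateRow ⟨d-1, by omega⟩ z :=
    fun z => congrArg of (update_snocTwo_snd hd V x 0 z).symm
  rw [hrow y, det_updateRow_eq_sum]
  simp only [← hrow]

lemma det_snocTwo_eq_sum (hd : 2 ≤ d) (V : Fin (d-2) → Fin d → R) (x y : Fin d → R) :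
    det (of (snocTwo V x y)) = ∑ a, ∑ b, x a * y b *
      det (of (snocTwo V (Pi.basisFun R (Fin d) a) (Pi.basisFun R (Fin d) b))) := by
  rw [det_snocTwo_eq_sum_fst hd]
  refine Finset.sum_congr rfl fun a _ => ?_
  rw [det_snocTwo_eq_sum_snd hd, Finset.mul_sum]
  exact Finset.sum_congr rfl fun b _ => by ring

lemma det_snocTwo_self (hd : 2 ≤ d) (V : Fin (d-2) → Fin d → R) (x : Fin d → R) :
    det (of (snocTwo V x x)) = 0 :=
  det_zero_of_row_eq (i := ⟨d-2, by omega⟩) (j := ⟨d-1, by omega⟩)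
    (Fin.ne_of_val_ne (show d - 2 ≠ d - 1 by omega))
    (by show snocTwo V x x _ = snocTwo V x x _; rw [snocTwo_apply_fst hd, snocTwo_apply_snd hd])

lemma det_snocTwo_comm (hd : 2 ≤ d) (V : Fin (d-2) → Fin d → R) (x y : Fin d → R) :
    det (of (snocTwo V y x)) = -det (of (snocTwo V x y)) := by
  have hne : (⟨d-2, by omega⟩ : Fin d) ≠ ⟨d-1, by omega⟩ :=
    Fin.ne_of_val_ne (show d - 2 ≠ d - 1 by omega)
  rw [snocTwo_swap hd]
  exact (det_permute _ (of (snocTwo V x y))).trans (by simp [Equiv.Perm.sign_swap hne])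

lemma sum_mul_det_snocTwo_eq_zero (hd : 2 ≤ d) (V : Fin (d-2) → Fin d → R)
    {S : Matrix (Fin d) (Fin d) R} (hS : S.IsSymm) :
    ∑ a, ∑ b, S a b *
      det (of (snocTwo V (Pi.basisFun R (Fin d) a) (Pi.basisFun R (Fin d) b))) = 0 :=
  Finset.sum_sum_eq_zero_of_antisymm _
    (fun a b => by rw [hS.apply a b, det_snocTwo_comm hd, mul_neg])
    (fun a => by rw [det_snocTwo_self hd, mul_zero])

lemma det_snocTwo_colSkip_eq_zero_iff [Nontrivial R] {p q : Fin d} (hpq : p < q) (a b : Fin d) :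
    det (of (snocTwo (Pi.basisFun R (Fin d) ∘ colSkip d p q)
      (Pi.basisFun R (Fin d) a) (Pi.basisFun R (Fin d) b))) = 0 ↔
      ¬ (a = p ∧ b = q ∨ a = q ∧ b = p) := by
  rw [← comp_snocTwo, ← injective_snocTwo_colSkip_iff hpq]
  exact det_basisFun_comp_eq_zero_iff _

lemma sum_mul_det_snocTwo_colSkip [Nontrivial R] {p q : Fin d} (hpq : p < q)
    (S : Matrix (Fin d) (Fin d) R) :
    ∑ a, ∑ b, S a b * det (of (snocTwo (Pi.basisFun R (Fin d) ∘ colSkip d p q)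
      (Pi.basisFun R (Fin d) a) (Pi.basisFun R (Fin d) b))) =
    (S p q - S q p) * det (of (snocTwo (Pi.basisFun R (Fin d) ∘ colSkip d p q)
      (Pi.basisFun R (Fin d) p) (Pi.basisFun R (Fin d) q))) := by
  have hd : 2 ≤ d := by have := q.2; rw [Fin.lt_def] at hpq; omega
  rw [← Fintype.sum_prod_type', Fintype.sum_eq_add (p, q) (q, p) (by simp [hpq.ne])]
  · rw [det_snocTwo_comm hd]
    ring
  · rintro ⟨a, b⟩ ⟨hpq', hqp'⟩
    rw [(det_snocTwo_colSkip_eq_zero_iff hpq a b).2 (by simp_all [Prod.ext_iff]), mul_zero]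

end Determinants

section RowSums

variable {R : Type*} [CommRing R] {n d : ℕ}

lemma sum_det_rowsFn_eq (hd : 2 ≤ d) (M : Matrix (Fin (2*n)) (Fin d) R)
    (i : Fin (d-2) → Fin (2*n)) :
    ∑ t, det (M.submatrix (rowsFn d i t) id) = ∑ a, ∑ b, crossGram M a b *
      det (of (snocTwo (M ∘ i) (Pi.basisFun R (Fin d) a) (Pi.basisFun R (Fin d) b))) := by
  have hrows : ∀ t, M.submatrix (rowsFn d i t) id =
      of (snocTwo (M ∘ i) (M (lowIdx t)) (M (highIdx t))) :=
    fun t => by rw [rowsFn_eq_snocTwo]; exact congrArg of (comp_snocTwo M i _ _)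
  conv_lhs => enter [2, t]; rw [hrows, det_snocTwo_eq_sum hd]
  simp only [crossGram, mul_apply, transpose_apply, submatrix_apply, id, Finset.sum_mul]
  rw [Finset.sum_comm]
  exact Finset.sum_congr rfl fun a _ => Finset.sum_comm

lemma isSymm_crossGram_of_sum_det_rowsFn [IsDomain R] (hd : 2 ≤ d)
    (N : Matrix (Fin (2*n)) (Fin d) R) {r : Fin d → Fin (2*n)} (hr : StrictMono r)
    (hN : N.submatrix r id = 1)
    (hsum : ∀ i : Fin (d-2) → Fin (2*n), StrictMono i →
      ∑ t, det (N.submatrix (rowsFn d i t) id) = 0) :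
    (crossGram N).IsSymm := by
  have hrows : ∀ a, N (r a) = Pi.basisFun R (Fin d) a := fun a => by
    ext c
    simpa [one_apply, Pi.single_apply, eq_comm] using congrFun (congrFun hN a) c
  have hlt : ∀ p q, p < q → crossGram N p q = crossGram N q p := by
    intro p q hpq
    have h := hsum (r ∘ colSkip d p q) (hr.comp (colSkip_strictMono p q))
    have hV : N ∘ (r ∘ colSkip d p q) = Pi.basisFun R (Fin d) ∘ colSkip d p q :=
      funext fun c => hrows _
    rw [sum_det_rowsFn_eq hd, hV, sum_mul_det_snocTwo_colSkip hpq] at h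
    refine sub_eq_zero.1 ((mul_eq_zero.1 h).resolve_right fun h0 => ?_)
    exact (det_snocTwo_colSkip_eq_zero_iff hpq p q).1 h0 (.inl ⟨rfl, rfl⟩)
  refine IsSymm.ext fun a b => ?_
  rcases lt_trichotomy a b with h | rfl | h
  · exact (hlt a b h).symm
  · rfl
  · exact hlt b a h

end RowSums

lemma exists_strictMono_isUnit_submatrix {k : Type*} [Field k] {m d : ℕ}
    (M : Matrix (Fin m) (Fin d) k) (hM : M.rank = d) :
    ∃ r : Fin d → Fin m, StrictMono r ∧ IsUnit (M.submatrix r id) := by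
  classical
  obtain ⟨b, -, -, hspan, hli⟩ := exists_linearIndepOn_extension (K := k) (v := M.row)
    (linearIndepOn_empty k M.row) (Set.empty_subset .univ)
  have hspan_eq : Submodule.span k (M.row '' b) = Submodule.span k (Set.range M.row) := by
    refine le_antisymm (Submodule.span_mono (Set.image_subset_range _ _)) ?_
    rw [← Set.image_univ, Submodule.span_le]
    exact hspan
  have hcard : b.toFinset.card = d := by
    have := linearIndependent_iff_card_eq_finrank_span.1 hli
    rw [← Set.image_eq_range, Set.finrank, hspan_eq, ← rank_eq_finrank_span_row, hM] at this
    rwa [Set.toFinset_card]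
  let r := b.toFinset.orderEmbOfFin hcard
  refine ⟨r, r.strictMono, linearIndependent_rows_iff_isUnit.1 ?_⟩
  have hr : ∀ j, r j ∈ b := fun j => Set.mem_toFinset.1 (b.toFinset.orderEmbOfFin_mem hcard j)
  exact hli.comp (fun j => ⟨r j, hr j⟩) fun j j' h => r.injective (by simpa using h)

theorem stmt6_general {k : Type*} [Field k] (n d : ℕ) (hd : 3 ≤ d)
    (M : Matrix (Fin (2*n)) (Fin d) k) (hM : M.rank = d) :
    IsIsotropic k n (LinearMap.range M.mulVecLin) ↔
      ∀ i : Fin (d-2) → Fin (2*n), StrictMono i →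
        ∑ t : Fin n, (M.submatrix (rowsFn d i t) id).det = 0 := by
  rw [isIsotropic_range_iff_isSymm]
  constructor
  · intro hS i _
    rw [sum_det_rowsFn_eq (by omega)]
    exact sum_mul_det_snocTwo_eq_zero (by omega) _ hS
  · intro hsum
    obtain ⟨r, hr, hQ⟩ := exists_strictMono_isUnit_submatrix M hM
    set Q := M.submatrix r id
    have hQdet : IsUnit Q.det := (isUnit_iff_isUnit_det Q).1 hQ
    have hM_eq : M = M * Q⁻¹ * Q := by
      rw [Matrix.mul_assoc, nonsing_inv_mul Q hQdet, Matrix.mul_one]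
    rw [hM_eq, crossGram_mul]
    refine IsSymm.transpose_mul_mul
      (isSymm_crossGram_of_sum_det_rowsFn (by omega) (M * Q⁻¹) hr ?_ fun i hi => ?_) Q
    · rw [submatrix_mul_id, mul_nonsing_inv Q hQdet]
    · simp only [submatrix_mul_id, det_mul, ← Finset.sum_mul, hsum i hi, zero_mul]

/-- the `d ≥ 3` case of Theorem 4.4: for `3 ≤ d ≤ n` and a `2n×d` matrix
`M` of rank `d` over an algebraically closed field, the column span `U` of `M` is
isotropic (i.e. `U ∈ Sp_{2n}(k)/P_d ⊆ G_{d,2n}`) iff for every strictly increasing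
`(d−2)`-tuple `i` of rows, `Σ_{t=1}^n det R(i,t) = 0`, where `R(i,t)` is the `d×d`
matrix whose rows are rows `i_1,…,i_{d−2}, t, n+t` of `M` in order. -/
theorem stmt6 {k : Type*} [Field k] [IsAlgClosed k] (n d : ℕ) (hd : 3 ≤ d) (hdn : d ≤ n)
    (M : Matrix (Fin (2*n)) (Fin d) k) (hM : M.rank = d) :
    IsIsotropic k n (LinearMap.range M.mulVecLin) ↔
      ∀ i : Fin (d-2) → Fin (2*n), StrictMono i →
        ∑ t : Fin n, (M.submatrix (rowsFn d i t) id).det = 0 :=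
  stmt6_general n d hd M hM
end

section
/- Let k be an algebraically closed field, 1 ≤ d ≤ n, and i ∈ I^{Sp}_{d,2n}. Then the union over all j ∈ I^{Sp}_{d,2n} with j ≤^{Sp} i of the B-orbits {b·e_j : b ∈ B} (where e_j = span(e_{j_1},…,e_{j_d})) equals the set of d-dimensional isotropic subspaces U of k^{2n} with dim(U ∩ K_{i_t}) ≥ t for all 1 ≤ t ≤ d. (Set-theoretic description of the Schubert variety X_i in Sp_{2n}(k)/P_d.) -/
open Matrix BigOperators

/-! Reorder the coordinates as `e_1, …, e_n, e_{2n}, …, e_{n+1}`. Then `K_•` is the standard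
flag `F_•`, the order `j ≤^{Sp} i` says that every entry of `j` comes no later than the
corresponding entry of `i`, and `B` is the stabiliser of `F_•` in `Sp_{2n}`: an upper block
triangular symplectic matrix preserves `F_m` for `m ≤ n`, hence also the symplectic complements
`F_{2n-m}`. So `b·e_j` meets `K_{i_t}` in at least `span(b e_{j_1}, …, b e_{j_t})`.

Conversely, a `d`-dimensional isotropic `U` has a reduced echelon basis `u_1, …, u_d` with
respect to `F_•`, with pivots `j` at the positions where `dim (U ∩ F_m)` jumps; the dimension
conditions on `U` say exactly that `j ≤^{Sp} i`. Isotropy forbids a pivot pair `{t, n+t}`, and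
the `u_t` extend to the columns of a matrix of `B` by adding to the remaining `e_c` multiples of
the vectors `e_{n+j_t}` (or `e_{j_t - n}`) that are `ω`-dual to the pivot coordinates. -/

lemma finrank_le_finrank_inf_ker_add_one {K V : Type*} [Field K] [AddCommGroup V] [Module K V]
    (W : Submodule K V) [FiniteDimensional K W] (f : V →ₗ[K] K) :
    Module.finrank K W ≤ Module.finrank K ↥(W ⊓ LinearMap.ker f) + 1 := by
  have hrange : Module.finrank K (LinearMap.range (f.domRestrict W)) ≤ 1 :=
    (Submodule.finrank_le _).trans (Module.finrank_self K).le
  have hker : Module.finrank K (LinearMap.ker (f.domRestrict W)) =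
      Module.finrank K ↥(W ⊓ LinearMap.ker f) := by
    rw [LinearMap.ker_domRestrict, ← Submodule.finrank_map_subtype_eq,
      Submodule.map_comap_subtype]
  have := LinearMap.finrank_range_add_finrank_ker (f.domRestrict W)
  omega

lemma linearIndependent_of_apply_eq_ite {K ι α : Type*} [Field K] [Fintype ι] [DecidableEq ι]
    {u : ι → α → K} {pv : ι → α} (hpiv : ∀ t s, u t (pv s) = if s = t then 1 else 0) :
    LinearIndependent K u := by
  refine Fintype.linearIndependent_iff.2 fun g hg s => ?_
  simpa [Finset.sum_apply, hpiv] using congr_fun hg (pv s)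

namespace SpSchubert

variable {k : Type*} [Field k] {n : ℕ}

-- the position of `e_{p+1}` in the order `e_1, …, e_n, e_{2n}, …, e_{n+1}`
def flagPos (p : Fin (2*n)) : ℕ := if p.1 < n then p.1 else 3*n - 1 - p.1

lemma flagPos_lt (p : Fin (2*n)) : flagPos p < 2*n := by
  have := p.2; unfold flagPos; split <;> omega

lemma flagPos_injective : Function.Injective (flagPos : Fin (2*n) → ℕ) := by
  intro p q h
  have := p.2; have := q.2
  unfold flagPos at h; ext; split at h <;> split at h <;> omega

lemma exists_flagPos_eq {m : ℕ} (hm : m < 2*n) : ∃ p : Fin (2*n), flagPos p = m := by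
  by_cases h : m < n
  · exact ⟨⟨m, by omega⟩, if_pos h⟩
  · refine ⟨⟨3*n - 1 - m, by omega⟩, ?_⟩
    unfold flagPos
    rw [if_neg (by simp; omega)]
    simp; omega

def partner (p : Fin (2*n)) : Fin (2*n) :=
  if h : p.1 < n then ⟨p.1 + n, by omega⟩ else ⟨p.1 - n, by have := p.2; omega⟩

lemma partner_val (p : Fin (2*n)) :
    (partner p).1 = if p.1 < n then p.1 + n else p.1 - n := by
  unfold partner; split <;> rfl

@[simp] lemma partner_partner (p : Fin (2*n)) : partner (partner p) = p := by
  have := p.2; ext; rw [partner_val, partner_val]; split <;> split <;> omega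

lemma flagPos_partner (p : Fin (2*n)) : flagPos (partner p) = 2*n - 1 - flagPos p := by
  have := p.2; unfold flagPos; rw [partner_val]; split <;> split <;> omega

lemma ne_partner_iff {d : ℕ} (j : Fin d → Fin (2*n)) :
    (∀ a b, (j b).1 ≠ (j a).1 + n) ↔ ∀ a b, j b ≠ partner (j a) := by
  refine ⟨fun h a b hb => ?_, fun h a b hb => ?_⟩
  · have := (j a).2; rw [Fin.ext_iff, partner_val] at hb
    split at hb
    · exact h a b hb
    · exact h b a (by omega)
  · exact h a b (Fin.ext (by rw [partner_val, if_pos (by have := (j b).2; omega)]; exact hb))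

def coordSign (p : Fin (2*n)) : k := if p.1 < n then 1 else -1

lemma coordSign_partner (p : Fin (2*n)) : (coordSign (partner p) : k) = -coordSign p := by
  have := p.2; unfold coordSign; rw [partner_val]
  split_ifs <;> first | omega | simp

lemma coordSign_mul_self (p : Fin (2*n)) : (coordSign p : k) * coordSign p = 1 := by
  unfold coordSign; split <;> ring

lemma coordSign_ne_zero (p : Fin (2*n)) : (coordSign p : k) ≠ 0 := by
  unfold coordSign; split <;> simp

lemma Jmat_apply (p q : Fin (2*n)) :
    Jmat k n p q = if q = partner p then -coordSign p else 0 := by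
  have := p.2
  simp only [Jmat, Matrix.of_apply, coordSign, Fin.ext_iff, partner_val]
  split_ifs <;> first | rfl | omega | simp

lemma Jmat_transpose : (Jmat k n)ᵀ = -Jmat k n := by
  ext p q
  rw [transpose_apply, neg_apply, Jmat_apply, Jmat_apply]
  by_cases h : q = partner p
  · subst h; simp [coordSign_partner]
  · rw [if_neg (fun h' => h (by rw [h', partner_partner])), if_neg h, neg_zero]

lemma Jmat_swap (p q : Fin (2*n)) : Jmat k n q p = -Jmat k n p q := by
  rw [← transpose_apply (Jmat k n), Jmat_transpose, neg_apply]

variable (k n) in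
def sympForm : LinearMap.BilinForm k (Fin (2*n) → k) := (Jmat k n).toBilin'

lemma sympForm_apply (u w : Fin (2*n) → k) : sympForm k n u w = u ⬝ᵥ Jmat k n *ᵥ w :=
  Matrix.toBilin'_apply' _ _ _

lemma sympForm_single_single (p q : Fin (2*n)) :
    sympForm k n (Pi.single p 1) (Pi.single q 1) = Jmat k n p q :=
  Matrix.toBilin'_single _ _ _

lemma sympForm_swap (x y : Fin (2*n) → k) : sympForm k n y x = -sympForm k n x y := by
  rw [sympForm_apply, sympForm_apply, dotProduct_mulVec, dotProduct_comm, ← mulVec_transpose,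
    Jmat_transpose, neg_mulVec, dotProduct_neg]

lemma sympForm_single_right (x : Fin (2*n) → k) (q : Fin (2*n)) :
    sympForm k n x (Pi.single q 1) = x (partner q) * coordSign q := by
  rw [sympForm_apply, mulVec_single_one, dotProduct, Finset.sum_eq_single (partner q)]
  · rw [col_apply, Jmat_apply, if_pos (partner_partner q).symm, coordSign_partner, neg_neg]
  · intro p _ hp
    rw [col_apply, Jmat_apply, if_neg (fun h => hp (by rw [h, partner_partner])), mul_zero]
  · simp

lemma sympForm_single_left (p : Fin (2*n)) (w : Fin (2*n) → k) :
    sympForm k n (Pi.single p 1) w = coordSign (partner p) * w (partner p) := by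
  rw [sympForm_swap, sympForm_single_right, coordSign_partner]; ring

lemma isIsotropic_iff (U : Submodule k (Fin (2*n) → k)) :
    IsIsotropic k n U ↔ ∀ u ∈ U, ∀ w ∈ U, sympForm k n u w = 0 := by
  simp only [IsIsotropic, sympForm_apply]

lemma isIsotropic_span {s : Set (Fin (2*n) → k)}
    (h : ∀ a ∈ s, ∀ b ∈ s, sympForm k n a b = 0) :
    IsIsotropic k n (Submodule.span k s) := by
  have hleft : ∀ a ∈ s, Submodule.span k s ≤ LinearMap.ker (sympForm k n a) :=
    fun a ha => Submodule.span_le.2 fun b hb => h a ha b hb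
  have hright : ∀ w ∈ Submodule.span k s,
      Submodule.span k s ≤ LinearMap.ker ((sympForm k n).flip w) :=
    fun w hw => Submodule.span_le.2 fun a ha => hleft a ha hw
  exact (isIsotropic_iff _).2 fun u hu w hw => hright w hw hu

section Symplectic

variable {M : Matrix (Fin (2*n)) (Fin (2*n)) k}

lemma sympForm_mulVec_mulVec (hM : Mᵀ * Jmat k n * M = Jmat k n) (x y : Fin (2*n) → k) :
    sympForm k n (M *ᵥ x) (M *ᵥ y) = sympForm k n x y := by
  have := LinearMap.congr_fun₂ (Matrix.toBilin'_comp (Jmat k n) M M) x y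
  rwa [hM] at this

lemma symplectic_iff_col :
    Mᵀ * Jmat k n * M = Jmat k n ↔
      ∀ a b, sympForm k n (M.col a) (M.col b) = Jmat k n a b := by
  rw [← Matrix.ext_iff]
  refine forall₂_congr fun a b => ?_
  rw [← Matrix.toBilin'_single (Mᵀ * Jmat k n * M), ← Matrix.toBilin'_comp]
  simp only [LinearMap.BilinForm.comp_apply, Matrix.toLin'_apply, mulVec_single_one]
  rfl

lemma mulVecLin_injective_of_symplectic (hM : Mᵀ * Jmat k n * M = Jmat k n) :
    Function.Injective M.mulVecLin := by
  refine (injective_iff_map_eq_zero _).2 fun x hx => funext fun q => ?_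
  have h := sympForm_mulVec_mulVec hM (Pi.single (partner q) 1) x
  rw [show M *ᵥ x = 0 from hx, map_zero, sympForm_single_left, partner_partner] at h
  exact (mul_eq_zero.1 h.symm).resolve_left (coordSign_ne_zero q)

lemma isIsotropic_map {U : Submodule k (Fin (2*n) → k)} (hU : IsIsotropic k n U)
    (hM : Mᵀ * Jmat k n * M = Jmat k n) : IsIsotropic k n (U.map M.mulVecLin) := by
  rw [isIsotropic_iff] at hU ⊢
  rintro _ ⟨x, hx, rfl⟩ _ ⟨y, hy, rfl⟩
  exact (sympForm_mulVec_mulVec hM x y).trans (hU x hx y hy)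

end Symplectic

section Flag

variable (k n) in
def flagSpace (m : ℕ) : Submodule k (Fin (2*n) → k) where
  carrier := {v | ∀ q, m ≤ flagPos q → v q = 0}
  add_mem' ha hb q hq := by simp [ha q hq, hb q hq]
  zero_mem' _ _ := rfl
  smul_mem' c _ ha q hq := by simp [ha q hq]

variable {m : ℕ} {v x y : Fin (2*n) → k}

lemma flagSpace_mono : Monotone (flagSpace k n) :=
  fun _ _ h _ hv q hq => hv q (h.trans hq)

lemma flagSpace_zero : flagSpace k n 0 = ⊥ :=
  eq_bot_iff.2 fun _ hv => funext fun q => hv q (Nat.zero_le _)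

lemma flagSpace_eq_top (hm : 2*n ≤ m) : flagSpace k n m = ⊤ :=
  eq_top_iff.2 fun _ _ q hq => absurd (flagPos_lt q) (by omega)

lemma single_mem_flagSpace {p : Fin (2*n)} (hp : flagPos p < m) (c : k) :
    Pi.single p c ∈ flagSpace k n m :=
  fun q hq => by rw [Pi.single_eq_of_ne]; rintro rfl; omega

lemma mem_flagSpace_iff_of_flagPos_eq {q : Fin (2*n)} (hq : flagPos q = m) :
    v ∈ flagSpace k n m ↔ v ∈ flagSpace k n (m + 1) ∧ v q = 0 := by
  refine ⟨fun hv => ⟨flagSpace_mono (Nat.le_succ m) hv, hv q hq.ge⟩,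
    fun ⟨hv, hvq⟩ p hp => ?_⟩
  rcases hp.eq_or_lt with h | h
  · rwa [flagPos_injective (h.symm.trans hq.symm)]
  · exact hv p h

lemma flagSpace_eq_span :
    flagSpace k n m = Submodule.span k {v | ∃ p, flagPos p < m ∧ v = Pi.single p 1} := by
  refine le_antisymm (fun v hv => ?_) (Submodule.span_le.2 ?_)
  · rw [← Finset.univ_sum_single v]
    refine Submodule.sum_mem _ fun p _ => ?_
    by_cases hp : flagPos p < m
    · have : Pi.single p (v p) = v p • (Pi.single p 1 : Fin (2*n) → k) := by
        rw [← Pi.single_smul', smul_eq_mul, mul_one]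
      rw [this]
      exact Submodule.smul_mem _ _ (Submodule.subset_span ⟨p, hp, rfl⟩)
    · rw [hv p (not_lt.1 hp), Pi.single_zero]
      exact Submodule.zero_mem _
  · rintro _ ⟨p, hp, rfl⟩
    exact single_mem_flagSpace hp 1

lemma Kspace_eq_flagSpace (q : Fin (2*n)) :
    Kspace k n (q.1 + 1) = flagSpace k n (flagPos q + 1) := by
  rw [Kspace, flagSpace_eq_span]
  congr! 3 with v
  refine exists_congr fun p => and_congr_left fun _ => ?_
  have := p.2; have := q.2
  unfold flagPos; split_ifs <;> omega

lemma sympForm_eq_zero_of_mem_flagSpace (hy : y ∈ flagSpace k n m)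
    (hx : x ∈ flagSpace k n (2*n - m)) : sympForm k n y x = 0 := by
  suffices flagSpace k n m ≤ LinearMap.ker ((sympForm k n).flip x) from this hy
  rw [flagSpace_eq_span, Submodule.span_le]
  rintro _ ⟨p, hp, rfl⟩
  have := flagPos_partner p
  have := flagPos_lt p
  simp [sympForm_single_left, hx (partner p) (by omega)]

lemma mem_flagSpace_of_sympForm_eq_zero
    (hx : ∀ p, flagPos p < m → sympForm k n (Pi.single p 1) x = 0) :
    x ∈ flagSpace k n (2*n - m) := by
  intro q hq
  have := flagPos_partner q
  have := flagPos_lt q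
  have h := hx (partner q) (by omega)
  rw [sympForm_single_left, partner_partner] at h
  exact (mul_eq_zero.1 h).resolve_left (coordSign_ne_zero q)

end Flag

section Borel

variable {M : Matrix (Fin (2*n)) (Fin (2*n)) k} {m : ℕ} {x : Fin (2*n) → k}

lemma mulVec_mem_flagSpace_of_le_of_inB (hM : inB k n M) (hm : m ≤ n)
    (hx : x ∈ flagSpace k n m) : M *ᵥ x ∈ flagSpace k n m := by
  intro q hq
  show ∑ b, M q b * x b = 0
  refine Finset.sum_eq_zero fun b _ => ?_
  by_cases hb : m ≤ flagPos b
  · rw [hx b hb, mul_zero]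
  · have := q.2; have := b.2
    unfold flagPos at hq hb
    split_ifs at hq hb <;> first | omega | rw [hM.2 q b (by omega), zero_mul]

lemma exists_mulVec_eq_of_inB (hM : inB k n M) (hm : m ≤ n) {v : Fin (2*n) → k}
    (hv : v ∈ flagSpace k n m) : ∃ y ∈ flagSpace k n m, M *ᵥ y = v := by
  let f : flagSpace k n m →ₗ[k] flagSpace k n m :=
    M.mulVecLin.restrict fun _ hx => mulVec_mem_flagSpace_of_le_of_inB hM hm hx
  have hf : Function.Injective f := fun a b hab =>
    Subtype.ext (mulVecLin_injective_of_symplectic hM.1 (congrArg Subtype.val hab))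
  obtain ⟨y, hy⟩ := LinearMap.injective_iff_surjective.1 hf ⟨v, hv⟩
  exact ⟨y, y.2, congrArg Subtype.val hy⟩

/-- For `m ≥ n` the flag space `F_m` is the symplectic complement of `F_{2n-m}`, which `M`
maps onto itself. -/
lemma mulVec_mem_flagSpace_of_inB (hM : inB k n M) (hx : x ∈ flagSpace k n m) :
    M *ᵥ x ∈ flagSpace k n m := by
  rcases le_or_gt m n with hmn | hmn
  · exact mulVec_mem_flagSpace_of_le_of_inB hM hmn hx
  rcases le_or_gt (2*n) m with h2n | h2n
  · rw [flagSpace_eq_top h2n]; trivial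
  rw [show m = 2*n - (2*n - m) by omega] at hx ⊢
  refine mem_flagSpace_of_sympForm_eq_zero fun p hp => ?_
  obtain ⟨y, hy, hMy⟩ := exists_mulVec_eq_of_inB hM (by omega) (single_mem_flagSpace hp 1)
  rw [← hMy, sympForm_mulVec_mulVec hM.1]
  exact sympForm_eq_zero_of_mem_flagSpace hy hx

lemma inB_of_col_mem_flagSpace (hM : Mᵀ * Jmat k n * M = Jmat k n)
    (hcol : ∀ c, M.col c ∈ flagSpace k n (flagPos c + 1)) : inB k n M := by
  refine ⟨hM, fun a b hab => hcol b a ?_⟩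
  have := a.2
  unfold flagPos; split_ifs <;> omega

end Borel

section Tuples

variable {d : ℕ}

lemma isSpBarTuple_iff_strictMono (j : Fin d → Fin (2*n)) :
    IsSpBarTuple n j ↔ StrictMono fun t => flagPos (j t) := by
  constructor
  · rintro ⟨-, r, -, hinc, hlt, hdec, hge⟩ s t hst
    have := (j s).2; have := (j t).2; have := Fin.lt_def.1 hst
    show flagPos (j s) < flagPos (j t)
    unfold flagPos
    by_cases htr : t.1 < r
    · have := Fin.lt_def.1 (hinc s t hst htr); have := hlt s (by omega); have := hlt t htr
      split_ifs; omega
    by_cases hsr : s.1 < r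
    · have := hlt s hsr; have := hge t (by omega)
      split_ifs <;> omega
    · have := Fin.lt_def.1 (hdec s t hst (by omega)); have := hge s (by omega)
      have := hge t (by omega)
      split_ifs <;> omega
  · intro hmono
    classical
    have hex : ∃ r, ∀ t : Fin d, r ≤ t.1 → n ≤ (j t).1 :=
      ⟨d, fun t ht => absurd t.2 (by omega)⟩
    have hlt : ∀ t : Fin d, t.1 < Nat.find hex → (j t).1 < n := by
      intro t ht
      obtain ⟨t', htt', ht'⟩ : ∃ t', t ≤ t' ∧ (j t').1 < n := by
        simpa using Nat.find_min hex ht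
      have hfp : flagPos (j t) ≤ flagPos (j t') := hmono.monotone htt'
      have := (j t).2; have := (j t').2
      unfold flagPos at hfp; split_ifs at hfp <;> omega
    refine ⟨Function.Injective.of_comp (f := flagPos) hmono.injective, Nat.find hex,
      Nat.find_min' hex fun t ht => absurd t.2 (by omega), fun a b hab hb => ?_, hlt,
      fun a b hab ha => ?_, Nat.find_spec hex⟩
    · have hfp : flagPos (j a) < flagPos (j b) := hmono hab
      have := hlt a (by have := Fin.lt_def.1 hab; omega); have := hlt b hb
      unfold flagPos at hfp; rw [Fin.lt_def]; split_ifs at hfp; omega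
    · have hfp : flagPos (j a) < flagPos (j b) := hmono hab
      have := Nat.find_spec hex a ha
      have := Nat.find_spec hex b (by have := Fin.lt_def.1 hab; omega)
      have := (j a).2; have := (j b).2
      unfold flagPos at hfp; rw [Fin.lt_def]; split_ifs at hfp <;> omega

lemma spGE_iff (i j : Fin d → Fin (2*n)) :
    spGE n i j ↔ ∀ t, flagPos (j t) ≤ flagPos (i t) := by
  refine forall_congr' fun t => ?_
  have := (i t).2; have := (j t).2
  unfold flagPos
  split_ifs <;> simp only [Fin.le_def] <;> omega

end Tuples

section Orbit

variable {d : ℕ} {M : Matrix (Fin (2*n)) (Fin (2*n)) k} {i j : Fin d → Fin (2*n)}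

lemma isIsotropic_eSpan (hj : ∀ a b, j b ≠ partner (j a)) : IsIsotropic k n (eSpan k j) :=
  isIsotropic_span <| by
    rintro _ ⟨a, rfl⟩ _ ⟨b, rfl⟩
    rw [sympForm_single_single, Jmat_apply, if_neg (hj a b)]

lemma map_eSpan (M : Matrix (Fin (2*n)) (Fin (2*n)) k) (j : Fin d → Fin (2*n)) :
    (eSpan k j).map M.mulVecLin = Submodule.span k (Set.range fun t => M.col (j t)) := by
  rw [eSpan, Submodule.map_span, ← Set.range_comp]
  congr 2
  funext t
  exact mulVec_single_one M (j t)

lemma linearIndependent_col (hM : Mᵀ * Jmat k n * M = Jmat k n) (hj : Function.Injective j) :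
    LinearIndependent k fun t => M.col (j t) := by
  have := ((Pi.basisFun k (Fin (2*n))).linearIndependent.comp j hj).map'
    M.mulVecLin (LinearMap.ker_eq_bot.2 (mulVecLin_injective_of_symplectic hM))
  rwa [show (⇑M.mulVecLin ∘ ⇑(Pi.basisFun k (Fin (2*n))) ∘ j) = fun t => M.col (j t) from
    funext fun t => by simp] at this

theorem mem_schubert_of_mem_orbit (hj : IsSpTuple n j)
    (hji : ∀ t, flagPos (j t) ≤ flagPos (i t)) (hM : inB k n M) :
    IsIsotropic k n ((eSpan k j).map M.mulVecLin) ∧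
      Module.finrank k ((eSpan k j).map M.mulVecLin) = d ∧
      ∀ t : Fin d, t.1 + 1 ≤
        Module.finrank k ↥((eSpan k j).map M.mulVecLin ⊓ Kspace k n ((i t).1 + 1)) := by
  have hli := linearIndependent_col hM.1 hj.1.1
  have hmono := (isSpBarTuple_iff_strictMono j).1 hj.1
  refine ⟨isIsotropic_map (isIsotropic_eSpan ((ne_partner_iff j).1 hj.2)) hM.1, ?_, fun t => ?_⟩
  · rw [map_eSpan, finrank_span_eq_card hli, Fintype.card_fin]
  let g : Fin (t.1 + 1) → Fin (2*n) → k := fun s => M.col (j (Fin.castLE t.2 s))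
  have hg : Submodule.span k (Set.range g) ≤
      (eSpan k j).map M.mulVecLin ⊓ Kspace k n ((i t).1 + 1) := by
    rw [Submodule.span_le]
    rintro _ ⟨s, rfl⟩
    refine ⟨map_eSpan M j ▸ Submodule.subset_span ⟨_, rfl⟩, ?_⟩
    show M.col _ ∈ Kspace k n ((i t).1 + 1)
    rw [Kspace_eq_flagSpace, ← mulVec_single_one]
    refine mulVec_mem_flagSpace_of_inB hM (single_mem_flagSpace ?_ 1)
    have := hmono.monotone (Fin.le_def.2 (Nat.lt_succ_iff.1 s.2) : Fin.castLE t.2 s ≤ t)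
    have := hji t
    omega
  have hgli : LinearIndependent k g := hli.comp _ (Fin.castLE_injective _)
  calc t.1 + 1 = Module.finrank k (Submodule.span k (Set.range g)) := by
        rw [finrank_span_eq_card hgli, Fintype.card_fin]
    _ ≤ _ := Submodule.finrank_mono hg

end Orbit

section Jumps

variable {U : Submodule k (Fin (2*n) → k)} {m t : ℕ}

variable (U) in
noncomputable def flagDim (m : ℕ) : ℕ := Module.finrank k ↥(U ⊓ flagSpace k n m)

lemma flagDim_mono : Monotone (flagDim U) :=
  fun _ _ h => Submodule.finrank_mono (inf_le_inf_left U (flagSpace_mono h))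

lemma flagDim_zero : flagDim U 0 = 0 := by
  rw [flagDim, flagSpace_zero, inf_bot_eq, finrank_bot]

lemma flagDim_of_two_mul_le (hm : 2*n ≤ m) : flagDim U m = Module.finrank k U := by
  rw [flagDim, flagSpace_eq_top hm, inf_top_eq]

lemma flagDim_le_finrank : flagDim U m ≤ Module.finrank k U :=
  Submodule.finrank_mono inf_le_left

lemma flagDim_succ_le : flagDim U (m + 1) ≤ flagDim U m + 1 := by
  rcases lt_or_ge m (2*n) with hm | hm
  · obtain ⟨q, hq⟩ := exists_flagPos_eq hm
    have : U ⊓ flagSpace k n m =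
        U ⊓ flagSpace k n (m + 1) ⊓ LinearMap.ker (LinearMap.proj q) := by
      ext x
      simp only [Submodule.mem_inf, mem_flagSpace_iff_of_flagPos_eq hq, LinearMap.mem_ker,
        LinearMap.proj_apply, and_assoc]
    rw [flagDim, flagDim, this]
    exact finrank_le_finrank_inf_ker_add_one _ _
  · rw [flagDim_of_two_mul_le hm, flagDim_of_two_mul_le (by omega)]
    omega

variable (U) in
/-- For `t < dim U`, `jumpPos U t - 1` is the flag position of the `t`-th pivot of `U`. -/
noncomputable def jumpPos (t : ℕ) : ℕ := sInf {m | t + 1 ≤ flagDim U m}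

lemma jumpPos_le (h : t + 1 ≤ flagDim U m) : jumpPos U t ≤ m := Nat.sInf_le h

lemma flagDim_le_of_lt_jumpPos (h : m < jumpPos U t) : flagDim U m ≤ t := by
  have : ¬t + 1 ≤ flagDim U m := Nat.notMem_of_lt_sInf (s := {m | t + 1 ≤ flagDim U m}) h
  omega

lemma le_flagDim_jumpPos (ht : t < Module.finrank k U) : t + 1 ≤ flagDim U (jumpPos U t) :=
  Nat.sInf_mem (s := {m | t + 1 ≤ flagDim U m})
    ⟨2*n, show t + 1 ≤ flagDim U (2*n) by rw [flagDim_of_two_mul_le le_rfl]; omega⟩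

lemma jumpPos_le_two_mul (ht : t < Module.finrank k U) : jumpPos U t ≤ 2*n :=
  jumpPos_le (by rw [flagDim_of_two_mul_le le_rfl]; omega)

lemma jumpPos_pos (ht : t < Module.finrank k U) : 0 < jumpPos U t := by
  by_contra h
  have := le_flagDim_jumpPos ht
  rw [Nat.eq_zero_of_not_pos h, flagDim_zero] at this
  omega

lemma flagDim_jumpPos (ht : t < Module.finrank k U) : flagDim U (jumpPos U t) = t + 1 := by
  have hpos := jumpPos_pos ht
  have h1 := flagDim_le_of_lt_jumpPos (show jumpPos U t - 1 < jumpPos U t by omega)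
  have h2 := flagDim_succ_le (U := U) (m := jumpPos U t - 1)
  rw [Nat.sub_add_cancel hpos] at h2
  have := le_flagDim_jumpPos ht
  omega

lemma jumpPos_strictMono {s : ℕ} (hst : s < t) (ht : t < Module.finrank k U) :
    jumpPos U s < jumpPos U t := by
  by_contra h
  have := flagDim_mono (U := U) (not_lt.1 h)
  rw [flagDim_jumpPos ht, flagDim_jumpPos (hst.trans ht)] at this
  omega

lemma jumpPos_flagDim (h : flagDim U m < flagDim U (m + 1)) :
    jumpPos U (flagDim U m) = m + 1 := by
  refine le_antisymm (jumpPos_le h) (Nat.succ_le_of_lt (lt_of_not_ge fun hle => ?_))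
  have := flagDim_mono (U := U) hle
  have := le_flagDim_jumpPos (lt_of_lt_of_le h flagDim_le_finrank)
  omega

end Jumps

section Pivots

variable {U : Submodule k (Fin (2*n) → k)} {d : ℕ} {pv : Fin d → Fin (2*n)}

lemma apply_pivot_eq_zero (hU : Module.finrank k U = d)
    (hpv : ∀ t, flagPos (pv t) + 1 = jumpPos U t) {x : Fin (2*n) → k} {s t : Fin d}
    (hx : x ∈ flagSpace k n (jumpPos U t)) (hts : t < s) : x (pv s) = 0 :=
  hx (pv s) (by have := hpv s; have := jumpPos_strictMono (U := U) hts (hU ▸ s.2); omega)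

lemma eq_zero_of_apply_pivot_eq_zero (hU : Module.finrank k U = d)
    (hpv : ∀ t, flagPos (pv t) + 1 = jumpPos U t) {x : Fin (2*n) → k} (hxU : x ∈ U)
    (hx : ∀ t, x (pv t) = 0) : x = 0 := by
  suffices ∀ m, x ∈ flagSpace k n m → x = 0 from
    this (2*n) (by rw [flagSpace_eq_top le_rfl]; trivial)
  intro m
  induction m with
  | zero => intro h; rwa [flagSpace_zero, Submodule.mem_bot] at h
  | succ m ih =>
    intro hxm
    refine ih fun q hq => ?_
    rcases hq.eq_or_lt with hqm | hqm
    · -- `x q ≠ 0` would make `flagDim U` jump at `m = flagPos q`, so `q` would be a pivot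
      by_contra hxq
      have hlt : U ⊓ flagSpace k n m < U ⊓ flagSpace k n (m + 1) :=
        SetLike.lt_iff_le_and_exists.2 ⟨inf_le_inf_left U (flagSpace_mono m.le_succ), x,
          Submodule.mem_inf.2 ⟨hxU, hxm⟩, fun h => hxq ((Submodule.mem_inf.1 h).2 q hqm.le)⟩
      have hdim := Submodule.finrank_lt_finrank_of_lt hlt
      have ht : flagDim U m < d := hU ▸ hdim.trans_le flagDim_le_finrank
      have hq : pv ⟨_, ht⟩ = q := flagPos_injective (by
        have := hpv ⟨_, ht⟩
        rw [Fin.val_mk, jumpPos_flagDim hdim] at this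
        omega)
      exact hxq (hq ▸ hx _)
    · exact hxm q hqm

lemma exists_apply_pivot_eq_ite (hU : Module.finrank k U = d)
    (hpv : ∀ t, flagPos (pv t) + 1 = jumpPos U t) (t : Fin d) :
    ∃ u ∈ U ⊓ flagSpace k n (jumpPos U t), ∀ s, u (pv s) = if s = t then 1 else 0 := by
  -- evaluation at the first `t + 1` pivots is injective on `W`, which has dimension `t + 1`
  let W := U ⊓ flagSpace k n (jumpPos U t)
  let φ : W →ₗ[k] Fin (t.1 + 1) → k :=
    LinearMap.pi fun s => (LinearMap.proj (pv (Fin.castLE t.2 s))).comp W.subtype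
  have hφ : Function.Injective φ := by
    refine (injective_iff_map_eq_zero φ).2 fun x hx =>
      Subtype.ext (eq_zero_of_apply_pivot_eq_zero hU hpv x.2.1 fun s => ?_)
    rcases le_or_gt s t with hst | hts
    · exact congr_fun hx ⟨s, Nat.lt_succ_of_le hst⟩
    · exact apply_pivot_eq_zero hU hpv x.2.2 hts
  have hdim : Module.finrank k W = Module.finrank k (Fin (t.1 + 1) → k) := by
    rw [Module.finrank_fin_fun]
    exact flagDim_jumpPos (hU ▸ t.2)
  obtain ⟨x, hx⟩ := (LinearMap.injective_iff_surjective_of_finrank_eq_finrank hdim).1 hφ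
    (Pi.single (Fin.last t) 1)
  refine ⟨x, x.2, fun s => ?_⟩
  rcases le_or_gt s t with hst | hts
  · have := congr_fun hx ⟨s, Nat.lt_succ_of_le hst⟩
    simp only [φ, LinearMap.pi_apply, LinearMap.comp_apply, LinearMap.proj_apply,
      Submodule.subtype_apply, Pi.single_apply, Fin.ext_iff, Fin.val_last] at this
    simpa [Fin.ext_iff] using this
  · rw [apply_pivot_eq_zero hU hpv x.2.2 hts, if_neg hts.ne']

theorem exists_echelon_basis (hU : Module.finrank k U = d) :
    ∃ (pv : Fin d → Fin (2*n)) (u : Fin d → Fin (2*n) → k),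
      (∀ t, flagPos (pv t) + 1 = jumpPos U t) ∧ (∀ t, u t ∈ U) ∧
      (∀ t, u t ∈ flagSpace k n (flagPos (pv t) + 1)) ∧
      (∀ t s, u t (pv s) = if s = t then 1 else 0) ∧ Submodule.span k (Set.range u) = U := by
  have hlt : ∀ t : Fin d, t.1 < Module.finrank k U := fun t => hU ▸ t.2
  choose pv hpv using fun t : Fin d => exists_flagPos_eq (n := n) (m := jumpPos U t - 1) (by
    have := jumpPos_le_two_mul (U := U) (hlt t); have := jumpPos_pos (U := U) (hlt t); omega)
  have hpv' : ∀ t, flagPos (pv t) + 1 = jumpPos U t := fun t => by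
    have := jumpPos_pos (hlt t); have := hpv t; omega
  choose u hu hpiv using exists_apply_pivot_eq_ite hU hpv'
  refine ⟨pv, u, hpv', fun t => (hu t).1, fun t => hpv' t ▸ (hu t).2, hpiv, ?_⟩
  refine Submodule.eq_of_le_of_finrank_eq
    (Submodule.span_le.2 (Set.range_subset_iff.2 fun t => (hu t).1)) ?_
  rw [finrank_span_eq_card (linearIndependent_of_apply_eq_ite hpiv), Fintype.card_fin, hU]

end Pivots

section Completion

variable {d : ℕ} {pv : Fin d → Fin (2*n)} {u : Fin d → Fin (2*n) → k}

lemma single_sub_mem_flagSpace {p : Fin (2*n)} {v : Fin (2*n) → k}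
    (hv : v ∈ flagSpace k n (flagPos p + 1)) (hvp : v p = 1) :
    Pi.single p 1 - v ∈ flagSpace k n (flagPos p) :=
  (mem_flagSpace_iff_of_flagPos_eq rfl).2
    ⟨sub_mem (single_mem_flagSpace (lt_add_one _) 1) hv, by simp [hvp]⟩

lemma pivot_ne_partner (hF : ∀ t, u t ∈ flagSpace k n (flagPos (pv t) + 1))
    (hpiv : ∀ t s, u t (pv s) = if s = t then 1 else 0)
    (hiso : ∀ s t, sympForm k n (u s) (u t) = 0) (s t : Fin d) : pv t ≠ partner (pv s) := by
  intro h
  have hr := single_sub_mem_flagSpace (hF s) (by rw [hpiv, if_pos rfl])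
  have hut : u t ∈ flagSpace k n (2*n - flagPos (pv s)) := by
    have := flagPos_lt (pv s)
    have := hF t
    rwa [h, flagPos_partner, show 2*n - 1 - flagPos (pv s) + 1 = 2*n - flagPos (pv s) by omega]
      at this
  have h0 := sympForm_eq_zero_of_mem_flagSpace hr hut
  rw [map_sub, LinearMap.sub_apply, hiso, sub_zero, sympForm_single_left, ← h, hpiv, if_pos rfl,
    mul_one] at h0
  exact coordSign_ne_zero _ h0

def dualVec (p : Fin (2*n)) : Fin (2*n) → k := (-coordSign p : k) • Pi.single (partner p) 1

lemma sympForm_dualVec (x : Fin (2*n) → k) (p : Fin (2*n)) :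
    sympForm k n x (dualVec p) = x p := by
  rw [dualVec, map_smul, sympForm_single_right, partner_partner, coordSign_partner, smul_eq_mul]
  linear_combination x p * coordSign_mul_self (k := k) p

variable (pv u) in
/-- The coefficients are chosen so that, when `u t (pv s) = δ_{ts}`, pairing with `u s` gives
`ω (u s) (completionCol pv u c) = ω (e_{pv s}) e_c`. -/
def completionCol (c : Fin (2*n)) : Fin (2*n) → k :=
  Pi.single c 1 + ∑ t, sympForm k n (Pi.single (pv t) 1 - u t) (Pi.single c 1) • dualVec (pv t)

lemma sympForm_completionCol (hpiv : ∀ t s, u t (pv s) = if s = t then 1 else 0)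
    (s : Fin d) (c : Fin (2*n)) :
    sympForm k n (u s) (completionCol pv u c) = Jmat k n (pv s) c := by
  simp only [completionCol, map_add, map_sum, map_smul, sympForm_dualVec, hpiv, smul_eq_mul,
    mul_ite, mul_one, mul_zero, Finset.sum_ite_eq', Finset.mem_univ, if_true, map_sub,
    LinearMap.sub_apply, sympForm_single_single]
  ring

lemma sympForm_completionCol_completionCol (hnp : ∀ s t, pv t ≠ partner (pv s))
    {a b : Fin (2*n)} (ha : ¬∃ t, pv t = a) (hb : ¬∃ t, pv t = b) :
    sympForm k n (completionCol pv u a) (completionCol pv u b) = Jmat k n a b := by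
  have hsa : ∀ t, (Pi.single a 1 : Fin (2*n) → k) (pv t) = 0 := fun t => by
    rw [Pi.single_eq_of_ne]; exact fun h => ha ⟨t, h⟩
  have hsb : ∀ t, (Pi.single b 1 : Fin (2*n) → k) (pv t) = 0 := fun t => by
    rw [Pi.single_eq_of_ne]; exact fun h => hb ⟨t, h⟩
  have hdd : ∀ s t, (dualVec (pv s) : Fin (2*n) → k) (pv t) = 0 := fun s t => by
    simp [dualVec, Pi.single_eq_of_ne (hnp s t)]
  have hdl : ∀ p (x : Fin (2*n) → k), sympForm k n (dualVec p) x = -x p := fun p x => by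
    rw [sympForm_swap, sympForm_dualVec]
  simp [completionCol, sympForm_dualVec, hdl, hsa, hsb, hdd, sympForm_single_single]

lemma completionCol_mem_flagSpace (hF : ∀ t, u t ∈ flagSpace k n (flagPos (pv t) + 1))
    (hpiv : ∀ t s, u t (pv s) = if s = t then 1 else 0) (c : Fin (2*n)) :
    completionCol pv u c ∈ flagSpace k n (flagPos c + 1) := by
  refine add_mem (single_mem_flagSpace (lt_add_one _) 1) (sum_mem fun t _ => ?_)
  have := flagPos_partner (pv t)
  have := flagPos_lt (pv t)
  by_cases h : flagPos (partner (pv t)) ≤ flagPos c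
  · exact Submodule.smul_mem _ _ (Submodule.smul_mem _ _
      (single_mem_flagSpace (k := k) (m := flagPos c + 1) (by omega) 1))
  · rw [sympForm_eq_zero_of_mem_flagSpace (single_sub_mem_flagSpace (hF t) (by simp [hpiv]))
      (single_mem_flagSpace (by omega) 1), zero_smul]
    exact zero_mem _

theorem exists_inB_col_eq (hinj : Function.Injective pv) (hnp : ∀ s t, pv t ≠ partner (pv s))
    (hF : ∀ t, u t ∈ flagSpace k n (flagPos (pv t) + 1))
    (hpiv : ∀ t s, u t (pv s) = if s = t then 1 else 0)
    (hiso : ∀ s t, sympForm k n (u s) (u t) = 0) :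
    ∃ M : Matrix (Fin (2*n)) (Fin (2*n)) k, inB k n M ∧ ∀ t, M.col (pv t) = u t := by
  let col := Function.extend pv u (completionCol pv u)
  have hcol_pv : ∀ t, col (pv t) = u t := hinj.extend_apply _ _
  have hcol : ∀ c, (¬∃ t, pv t = c) → col c = completionCol pv u c :=
    fun c hc => Function.extend_apply' _ _ _ hc
  refine ⟨Matrix.of fun q c => col c q,
    inB_of_col_mem_flagSpace (symplectic_iff_col.2 fun a b => ?_) fun c => ?_, hcol_pv⟩
  · change sympForm k n (col a) (col b) = _
    rcases em (∃ s, pv s = a) with ⟨s, rfl⟩ | ha <;>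
      rcases em (∃ t, pv t = b) with ⟨t, rfl⟩ | hb
    · rw [hcol_pv, hcol_pv, hiso, Jmat_apply, if_neg (hnp s t)]
    · rw [hcol_pv, hcol b hb, sympForm_completionCol hpiv]
    · rw [hcol a ha, hcol_pv, sympForm_swap, sympForm_completionCol hpiv, Jmat_swap, neg_neg]
    · rw [hcol a ha, hcol b hb, sympForm_completionCol_completionCol hnp ha hb]
  · change col c ∈ _
    rcases em (∃ t, pv t = c) with ⟨t, rfl⟩ | hc
    · rw [hcol_pv]; exact hF t
    · rw [hcol c hc]; exact completionCol_mem_flagSpace hF hpiv c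

end Completion

theorem exists_inB_eq_map_eSpan {d : ℕ} {U : Submodule k (Fin (2*n) → k)}
    (hiso : IsIsotropic k n U) (hU : Module.finrank k U = d) :
    ∃ pv : Fin d → Fin (2*n), IsSpTuple n pv ∧ (∀ t, flagPos (pv t) + 1 = jumpPos U t) ∧
      ∃ M : Matrix (Fin (2*n)) (Fin (2*n)) k, inB k n M ∧ U = (eSpan k pv).map M.mulVecLin := by
  obtain ⟨pv, u, hpv, huU, huF, hpiv, hspan⟩ := exists_echelon_basis hU
  have hmono : StrictMono fun t => flagPos (pv t) := fun s t hst => by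
    show flagPos (pv s) < flagPos (pv t)
    have := jumpPos_strictMono (U := U) hst (hU ▸ t.2)
    have := hpv s; have := hpv t
    omega
  have hiso' : ∀ s t, sympForm k n (u s) (u t) = 0 :=
    fun s t => (isIsotropic_iff U).1 hiso _ (huU s) _ (huU t)
  have hnp := pivot_ne_partner huF hpiv hiso'
  obtain ⟨M, hM, hMcol⟩ :=
    exists_inB_col_eq (Function.Injective.of_comp (f := flagPos) hmono.injective) hnp huF hpiv hiso'
  refine ⟨pv, ⟨(isSpBarTuple_iff_strictMono pv).2 hmono, (ne_partner_iff pv).2 hnp⟩, hpv,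
    M, hM, ?_⟩
  rw [map_eSpan, ← hspan]
  simp only [hMcol]

end SpSchubert

theorem stmt9_general {k : Type*} [Field k] (n d : ℕ)
    (i : Fin d → Fin (2*n)) :
    {V : Submodule k (Fin (2*n) → k) |
        ∃ j : Fin d → Fin (2*n), IsSpTuple n j ∧ spGE n i j ∧
          ∃ M : Matrix (Fin (2*n)) (Fin (2*n)) k,
            inB k n M ∧ V = Submodule.map M.mulVecLin (eSpan k j)}
      = {U : Submodule k (Fin (2*n) → k) |
          IsIsotropic k n U ∧ Module.finrank k U = d ∧
          ∀ t : Fin d, t.1 + 1 ≤ Module.finrank k ↥(U ⊓ Kspace k n ((i t).1 + 1))} := by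
  ext U
  constructor
  · rintro ⟨j, hj, hji, M, hM, rfl⟩
    exact SpSchubert.mem_schubert_of_mem_orbit hj ((SpSchubert.spGE_iff i j).1 hji) hM
  · rintro ⟨hiso, hU, hdim⟩
    obtain ⟨pv, hpv, hjump, M, hM, hUM⟩ := SpSchubert.exists_inB_eq_map_eSpan hiso hU
    refine ⟨pv, hpv, (SpSchubert.spGE_iff i pv).2 fun t => ?_, M, hM, hUM⟩
    have := SpSchubert.jumpPos_le (U := U) (t := t) (m := SpSchubert.flagPos (i t) + 1)
      (by rw [SpSchubert.flagDim, ← SpSchubert.Kspace_eq_flagSpace]; exact hdim t)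
    have := hjump t
    omega

/-- set-theoretic description of the Schubert variety `X_i` in
`Sp_{2n}(k)/P_d`: for `1 ≤ d ≤ n` and `i ∈ I^{Sp}_{d,2n}`, the union over
`j ∈ I^{Sp}_{d,2n}` with `j ≤^{Sp} i` of the `B`-orbits of `e_j` equals the set of
`d`-dimensional isotropic subspaces `U ⊆ k^{2n}` with `dim(U ∩ K_{i_t}) ≥ t` for all
`1 ≤ t ≤ d`. -/
theorem stmt9 {k : Type*} [Field k] [IsAlgClosed k] (n d : ℕ) (hd1 : 1 ≤ d) (hdn : d ≤ n)
    (i : Fin d → Fin (2*n)) (hi : IsSpTuple n i) :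
    {V : Submodule k (Fin (2*n) → k) |
        ∃ j : Fin d → Fin (2*n), IsSpTuple n j ∧ spGE n i j ∧
          ∃ M : Matrix (Fin (2*n)) (Fin (2*n)) k,
            inB k n M ∧ V = Submodule.map M.mulVecLin (eSpan k j)}
      = {U : Submodule k (Fin (2*n) → k) |
          IsIsotropic k n U ∧ Module.finrank k U = d ∧
          ∀ t : Fin d, t.1 + 1 ≤ Module.finrank k ↥(U ⊓ Kspace k n ((i t).1 + 1))} :=
  stmt9_general n d i
end
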